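/- arXiv:2507.20381 — 9 statements merged into one kernel-verified Lean document; each statement's English description precedes it below -/
import Mathlib

section
/- Let n ∈ ω and let M be an infinite L-structure. If M is (n+2)-sunflowerable then M is (n+1)-sunflowerable. -/
open FirstOrder Cardinal

universe u v w x

namespace StructuredSunflowers

/-- A sunflower (Δ-system): a family of sets whose pairwise intersections of
distinct members all equal a common core `r`. -/
def IsSunflower {β : Type*} (Y : Set (Set β)) : Prop :=
  ∃ r : Set β, ∀ p ∈ Y, ∀ q ∈ Y, p ≠ q → p ∩ q = r

variable (L : FirstOrder.Language.{u, v})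

/-- `M` is `n`-sunflowerable: every isomorphic copy of `M` whose underlying set consists of
sets of size `n` contains a substructure isomorphic to the whole whose underlying
set is a sunflower. -/
def NSunflowerable (M : Type w) [L.Structure M] (n : ℕ) : Prop :=
  ∀ (β : Type x) (Y : Set (Set β)) (_ : L.Structure Y),
    (∀ p ∈ Y, p.Finite ∧ p.ncard = n) →
    Nonempty (M ≃[L] Y) →
    ∃ g : M ↪[L] Y, IsSunflower ((fun z : Y => (z : Set β)) '' Set.range g)

/-- `M` is sunflowerable if it is `n`-sunflowerable for every `n`. -/
def Sunflowerable (M : Type w) [L.Structure M] : Prop :=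
  ∀ n : ℕ, NSunflowerable.{u, v, w, x} L M n

/-- `M` is strongly sunflowerable: same as sunflowerable, but for copies whose
underlying sets consist of finite sets of arbitrary sizes. -/
def StronglySunflowerable (M : Type w) [L.Structure M] : Prop :=
  ∀ (β : Type x) (Y : Set (Set β)) (_ : L.Structure Y),
    (∀ p ∈ Y, p.Finite) →
    Nonempty (M ≃[L] Y) →
    ∃ g : M ↪[L] Y, IsSunflower ((fun z : Y => (z : Set β)) '' Set.range g)

/-- `M` is indivisible: any partition of `M` into fewer than `|M|` pieces has a piece
containing the range of a self-embedding of `M` (i.e. a copy of `M`). -/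
def Indivisible (M : Type w) [L.Structure M] : Prop :=
  ∀ (ι : Type w) (P : ι → Set M), #ι < #M →
    (∀ m : M, ∃! i : ι, m ∈ P i) →
    ∃ i : ι, ∃ g : M ↪[L] M, Set.range g ⊆ P i

/-- `qftp(a̅, x) = qftp(b̅, y)`: the extended tuples satisfy the same quantifier-free
formulas. -/
def SameQFTypeExt {M : Type w} [L.Structure M] {ι : Type*} (a b : ι → M) (x y : M) : Prop :=
  ∀ φ : L.Formula (ι ⊕ Unit), φ.IsQF →
    (φ.Realize (Sum.elim a fun _ => x) ↔ φ.Realize (Sum.elim b fun _ => y))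

/-- `qftp(a̅) = qftp(b̅)`: two tuples satisfy the same quantifier-free formulas. -/
def SameQFType {M : Type w} [L.Structure M] {ι : Type*} (a b : ι → M) : Prop :=
  ∀ φ : L.Formula ι, φ.IsQF → (φ.Realize a ↔ φ.Realize b)

/-- Universal duplication of ω-quantifier-free types: for each finite tuple `a̅` and
`x ∉ a̅`, the set `B_{a̅,x}` of realizations of `qftp(a̅,x)` over `a̅` contains a copy of `M`. -/
def UnivDupQF (M : Type w) [L.Structure M] : Prop :=
  ∀ (n : ℕ) (a : Fin n → M) (x : M), x ∉ Set.range a →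
    ∃ g : M ↪[L] M, Set.range g ⊆ {b : M | SameQFTypeExt L a a x b}

/-- Universal duplication of κ-quantifier-free types. -/
def UnivDupQFAt (M : Type w) [L.Structure M] (κ : Cardinal.{w}) : Prop :=
  ∀ (ι : Type w), #ι < κ → ∀ (a : ι → M) (x : M), x ∉ Set.range a →
    ∃ g : M ↪[L] M, Set.range g ⊆ {b : M | SameQFTypeExt L a a x b}

/-- Strong universal duplication of κ-quantifier-free types: the substructure on all of
`B_{a̅,x}` is isomorphic to `M`. -/
def StrongUnivDupQFAt (M : Type w) [L.Structure M] (κ : Cardinal.{w}) : Prop :=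
  ∀ (ι : Type w), #ι < κ → ∀ (a : ι → M) (x : M), x ∉ Set.range a →
    ∃ g : M ↪[L] M, Set.range g = {b : M | SameQFTypeExt L a a x b}

/-- κ-saturation: every finitely realized set of formulas in one variable over fewer than
κ parameters is realized. -/
def IsSaturated (M : Type w) [L.Structure M] (κ : Cardinal.{w}) : Prop :=
  ∀ (ι : Type w), #ι < κ → ∀ (a : ι → M) (p : Set (L.Formula (ι ⊕ Unit))),
    (∀ s : Finset (L.Formula (ι ⊕ Unit)), ↑s ⊆ p →
      ∃ x : M, ∀ φ ∈ s, φ.Realize (Sum.elim a fun _ => x)) →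
    ∃ x : M, ∀ φ ∈ p, φ.Realize (Sum.elim a fun _ => x)

/-- `M` has quantifier elimination: every formula is equivalent in `M` to a
quantifier-free formula. -/
def HasQE (M : Type w) [L.Structure M] : Prop :=
  ∀ (n : ℕ) (φ : L.Formula (Fin n)), ∃ ψ : L.Formula (Fin n), ψ.IsQF ∧
    ∀ v : Fin n → M, (φ.Realize v ↔ ψ.Realize v)

/-- 3-amalgamation of quantifier-free types, stated via realized tuples. -/
def ThreeAmalgQF (M : Type w) [L.Structure M] : Prop :=
  ∀ (k l m : ℕ) (xa xa' : Fin k → M) (yb yb' : Fin l → M) (zc zc' : Fin m → M),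
    SameQFType L xa xa' → SameQFType L yb yb' → SameQFType L zc zc' →
    ∃ (xx : Fin k → M) (yy : Fin l → M) (zz : Fin m → M),
      SameQFType L (Fin.append xx yy) (Fin.append xa yb) ∧
      SameQFType L (Fin.append yy zz) (Fin.append yb' zc) ∧
      SameQFType L (Fin.append zz xx) (Fin.append zc' xa')

/-- Ultrahomogeneity: tuples of length `< |M|` with the same quantifier-free type have the
one-point extension property. -/
def UltraHomog (M : Type w) [L.Structure M] : Prop :=
  ∀ (ι : Type w), #ι < #M → ∀ (a b : ι → M), SameQFType L a b →
    ∀ x : M, ∃ y : M, SameQFTypeExt L a b x y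


/-!
Adjoining a fresh point `none` to every member of a copy of `M` gives an isomorphic copy whose
members are one larger. A sunflower inside it pulls back along `some` to a sunflower inside the
original copy, since `some ⁻¹'` recovers each member and commutes with intersections.
-/

section Sunflower

variable {α β : Type*}

theorem IsSunflower.of_image {F : Set α → Set β} (φ : α → β) (hF : ∀ p, φ ⁻¹' F p = p)
    {S : Set (Set α)} (h : IsSunflower (F '' S)) : IsSunflower S := by
  obtain ⟨r, hr⟩ := h
  refine ⟨φ ⁻¹' r, fun p hp q hq hpq => ?_⟩
  have hFpq : F p ≠ F q := fun he => hpq (by rw [← hF p, he, hF q])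
  rw [← hr _ (Set.mem_image_of_mem F hp) _ (Set.mem_image_of_mem F hq) hFpq, Set.preimage_inter,
    hF, hF]

def adjoinNone (p : Set α) : Set (Option α) :=
  insert none (some '' p)

@[simp]
theorem preimage_some_adjoinNone (p : Set α) : some ⁻¹' adjoinNone p = p := by
  ext; simp [adjoinNone]

theorem adjoinNone_injective : Function.Injective (adjoinNone (α := α)) :=
  Function.LeftInverse.injective preimage_some_adjoinNone

theorem finite_adjoinNone {p : Set α} (hp : p.Finite) : (adjoinNone p).Finite :=
  (hp.image some).insert none

theorem ncard_adjoinNone {p : Set α} (hp : p.Finite) : (adjoinNone p).ncard = p.ncard + 1 := by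
  rw [adjoinNone, Set.ncard_insert_of_notMem (by simp) (hp.image some),
    Set.ncard_image_of_injective p (Option.some_injective α)]

end Sunflower

theorem NSunflowerable.of_succ {M : Type w} [L.Structure M] {k : ℕ}
    (h : NSunflowerable.{u, v, w, x} L M (k + 1)) : NSunflowerable.{u, v, w, x} L M k := by
  intro β Y _ hY ⟨iso⟩
  let e : Y ≃ adjoinNone '' Y := Equiv.Set.image adjoinNone Y adjoinNone_injective
  let _ : L.Structure (adjoinNone '' Y) := e.inducedStructure
  let E : Y ≃[L] adjoinNone '' Y := e.inducedStructureEquiv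
  have hY' : ∀ p ∈ adjoinNone '' Y, p.Finite ∧ p.ncard = k + 1 := by
    rintro _ ⟨p, hp, rfl⟩
    obtain ⟨hfin, hcard⟩ := hY p hp
    exact ⟨finite_adjoinNone hfin, hcard ▸ ncard_adjoinNone hfin⟩
  obtain ⟨g, hg⟩ := h (Option β) (adjoinNone '' Y) _ hY' ⟨E.comp iso⟩
  refine ⟨E.symm.toEmbedding.comp g, IsSunflower.of_image some preimage_some_adjoinNone ?_⟩
  convert hg using 1
  rw [Set.image_image, ← Set.range_comp, ← Set.range_comp]
  exact congrArg Set.range (funext fun m => congrArg Subtype.val (e.apply_symm_apply (g m)))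

theorem nsunflowerable_of_succ_general (L : FirstOrder.Language.{u, v}) (M : Type w) [L.Structure M]
    (n : ℕ) (h : NSunflowerable.{u, v, w, x} L M (n + 2)) :
    NSunflowerable.{u, v, w, x} L M (n + 1) :=
  h.of_succ

/-- If an infinite `L`-structure `M` is `(n+2)`-sunflowerable then it is
`(n+1)`-sunflowerable. -/
theorem nsunflowerable_of_succ (L : FirstOrder.Language.{u, v}) (M : Type w) [L.Structure M]
    [Infinite M] (n : ℕ) (h : NSunflowerable.{u, v, w, x} L M (n + 2)) :
    NSunflowerable.{u, v, w, x} L M (n + 1) :=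
  nsunflowerable_of_succ_general L M n h

end StructuredSunflowers
end

section
/- If an infinite L-structure M is 2-sunflowerable, then M is indivisible: for every partition (P_i)_{i∈α} of the underlying set M with α < |M|, there is some i ∈ α and Q ⊆ P_i such that the substructure of M on Q is isomorphic to M. -/
/-!
Colour `M` by the piece containing each point and replace every `m` by the pair
`{m, colour of m}`; the induced structure on these pairs is a copy of `M` by 2-element sets.
Two such pairs for distinct points meet in the common colour or not at all, so a sunflower among
them has either pairwise distinct colours, which is impossible with fewer than `|M|` colours,
or a single colour, which gives a monochromatic copy of `M`.
-/

open FirstOrder Cardinal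

universe u v w x

namespace StructuredSunflowers

variable (L : FirstOrder.Language.{u, v})

section ColorPair

variable {M ι : Type*}

def colorPair (c : M → ι) (m : M) : Set (M ⊕ ι) :=
  {Sum.inl m, Sum.inr (c m)}

theorem colorPair_injective (c : M → ι) : Function.Injective (colorPair c) := by
  intro a b hab
  have : Sum.inl a ∈ colorPair c b := hab ▸ Set.mem_insert _ _
  simpa [colorPair] using this

theorem colorPair_ncard (c : M → ι) (m : M) : (colorPair c m).ncard = 2 :=
  Set.ncard_pair Sum.inl_ne_inr

theorem inr_mem_colorPair_iff {c : M → ι} {m : M} {i : ι} :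
    Sum.inr i ∈ colorPair c m ↔ c m = i := by
  simp [colorPair, eq_comm]

theorem injOn_or_exists_eq_of_isSunflower_image_colorPair {c : M → ι} {S : Set M}
    (hS : IsSunflower (colorPair c '' S)) : S.InjOn c ∨ ∃ i, ∀ m ∈ S, c m = i := by
  obtain ⟨r, hr⟩ := hS
  have hne {a b : M} (hab : a ≠ b) : colorPair c a ≠ colorPair c b :=
    (colorPair_injective c).ne hab
  refine or_iff_not_imp_left.2 fun hninj => ?_
  obtain ⟨a, ha, b, hb, hcab, hab⟩ : ∃ a ∈ S, ∃ b ∈ S, c a = c b ∧ a ≠ b := by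
    simpa [Set.InjOn] using hninj
  have hcore : Sum.inr (c a) ∈ r := by
    rw [← hr _ (Set.mem_image_of_mem _ ha) _ (Set.mem_image_of_mem _ hb) (hne hab)]
    exact ⟨inr_mem_colorPair_iff.2 rfl, inr_mem_colorPair_iff.2 hcab.symm⟩
  refine ⟨c a, fun m hm => ?_⟩
  obtain rfl | hma := eq_or_ne m a
  · rfl
  rw [← hr _ (Set.mem_image_of_mem _ hm) _ (Set.mem_image_of_mem _ ha) (hne hma)] at hcore
  exact inr_mem_colorPair_iff.1 hcore.1

end ColorPair

variable {L} {M : Type w} [L.Structure M]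

theorem NSunflowerable.exists_embedding_isSunflower_image {n : ℕ}
    (h : NSunflowerable.{u, v, w, x} L M n) {β : Type x} (f : M → Set β)
    (hf : Function.Injective f) (hfin : ∀ m, (f m).Finite ∧ (f m).ncard = n) :
    ∃ g : M ↪[L] M, IsSunflower (f '' Set.range g) := by
  let e : M ≃ Set.range f := Equiv.ofInjective f hf
  let _ : L.Structure (Set.range f) := e.inducedStructure
  obtain ⟨g, hg⟩ := h β (Set.range f) _ (by rintro _ ⟨m, rfl⟩; exact hfin m)
    ⟨e.inducedStructureEquiv⟩
  refine ⟨e.inducedStructureEquiv.symm.toEmbedding.comp g, ?_⟩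
  convert hg using 1
  ext s
  simp only [Set.mem_image, Set.mem_range, exists_exists_eq_and]
  exact exists_congr fun m => by rw [← Equiv.apply_ofInjective_symm hf (g m)]; rfl

theorem indivisible_of_forall_coloring
    (H : ∀ (ι : Type w) (c : M → ι), #ι < #M → ∃ i, ∃ g : M ↪[L] M, ∀ m, c (g m) = i) :
    Indivisible L M := by
  intro ι P hlt hP
  choose c hc _ using hP
  obtain ⟨i, g, hg⟩ := H ι c hlt
  refine ⟨i, g, ?_⟩
  rintro _ ⟨m, rfl⟩
  exact hg m ▸ hc (g m)

theorem indivisible_of_twoSunflowerable_general (L : FirstOrder.Language.{u, v}) (M : Type w) [L.Structure M]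
    (h : NSunflowerable.{u, v, w, w} L M 2) : Indivisible L M := by
  refine indivisible_of_forall_coloring fun ι c hlt => ?_
  obtain ⟨g, hg⟩ := h.exists_embedding_isSunflower_image (colorPair c) (colorPair_injective c)
    fun m => ⟨(Set.finite_singleton _).insert _, colorPair_ncard c m⟩
  rcases injOn_or_exists_eq_of_isSunflower_image_colorPair hg with hinj | ⟨i, hi⟩
  · refine absurd (mk_le_of_injective (f := c ∘ g) fun a b hab => ?_) hlt.not_ge
    exact g.injective (hinj (Set.mem_range_self a) (Set.mem_range_self b) hab)
  · exact ⟨i, g, fun m => hi _ (Set.mem_range_self m)⟩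

/-- A `2`-sunflowerable infinite structure is indivisible. -/
theorem indivisible_of_twoSunflowerable (L : FirstOrder.Language.{u, v}) (M : Type w) [L.Structure M]
    [Infinite M] (h : NSunflowerable.{u, v, w, w} L M 2) : Indivisible L M :=
  indivisible_of_twoSunflowerable_general L M h

end StructuredSunflowers
end

section
/- An infinite structure M is strongly sunflowerable if and only if M is sunflowerable and uncountable. -/
open FirstOrder Cardinal

universe u v w x

namespace StructuredSunflowers

variable (L : FirstOrder.Language.{u, v})

/-!
Countable structures fail: order `M` like `ℕ` and represent each point by its (finite) initial
segment; no three distinct initial segments of a linear order form a sunflower. Uncountable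
sunflowerable structures succeed: given a copy of `M` by finite sets, 2-sunflowerability applied
to the copy `m ↦ {m, size of m}` gives a self-embedding on which the size is either injective
(impossible into `ℕ`) or constant, say `n`, and `n`-sunflowerability on the resulting
constant-size copy produces the structured sunflower.
-/

variable {L} {M : Type w} [L.Structure M]

theorem IsSunflower.eq_or_eq_or_eq_of_Iic {α : Type*} [LinearOrder α] {s : Set α}
    (hs : IsSunflower (Set.Iic '' s)) {a b c : α} (ha : a ∈ s) (hb : b ∈ s) (hc : c ∈ s) :
    a = b ∨ a = c ∨ b = c := by
  obtain ⟨r, hr⟩ := hs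
  have hcore : ∀ x ∈ s, ∀ y ∈ s, x ≠ y → Set.Iic (min x y) = r := fun x hx y hy hxy => by
    rw [← Set.Iic_inter_Iic]
    exact hr _ ⟨x, hx, rfl⟩ _ ⟨y, hy, rfl⟩ (Set.Iic_injective.ne hxy)
  by_contra! hne
  obtain ⟨hab, hac, hbc⟩ := hne
  have h₁ := Set.Iic_injective ((hcore a ha b hb hab).trans (hcore a ha c hc hac).symm)
  have h₂ := Set.Iic_injective ((hcore a ha b hb hab).trans (hcore b hb c hc hbc).symm)
  grind

theorem exists_embedding_isSunflower_of_copy {β : Type x} (h : M → Set β)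
    (hinj : Function.Injective h)
    (H : ∀ _ : L.Structure (Set.range h), Nonempty (M ≃[L] Set.range h) →
      ∃ g : M ↪[L] Set.range h,
        IsSunflower ((fun z : Set.range h => (z : Set β)) '' Set.range g)) :
    ∃ g : M ↪[L] M, IsSunflower (Set.range (h ∘ g)) := by
  let _ : L.Structure (Set.range h) := (Equiv.ofInjective h hinj).inducedStructure
  let ε : M ≃[L] Set.range h := (Equiv.ofInjective h hinj).inducedStructureEquiv
  obtain ⟨g, hg⟩ := H _ ⟨ε⟩
  refine ⟨ε.symm.toEmbedding.comp g, ?_⟩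
  have hcomp : h ∘ (ε.symm.toEmbedding.comp g) = (fun z : Set.range h => (z : Set β)) ∘ g :=
    funext fun m => Equiv.apply_ofInjective_symm hinj (g m)
  rwa [hcomp, Set.range_comp]

theorem NSunflowerable.exists_embedding_isSunflower {n : ℕ}
    (hs : NSunflowerable.{u, v, w, x} L M n) {β : Type x} (h : M → Set β)
    (hinj : Function.Injective h) (hsize : ∀ m, (h m).Finite ∧ (h m).ncard = n) :
    ∃ g : M ↪[L] M, IsSunflower (Set.range (h ∘ g)) :=
  exists_embedding_isSunflower_of_copy h hinj fun _ =>
    hs β _ _ (Set.forall_mem_range.2 hsize)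

theorem StronglySunflowerable.exists_embedding_isSunflower
    (hs : StronglySunflowerable.{u, v, w, x} L M) {β : Type x} (h : M → Set β)
    (hinj : Function.Injective h) (hfin : ∀ m, (h m).Finite) :
    ∃ g : M ↪[L] M, IsSunflower (Set.range (h ∘ g)) :=
  exists_embedding_isSunflower_of_copy h hinj fun _ =>
    hs β _ _ (Set.forall_mem_range.2 hfin)

theorem StronglySunflowerable.sunflowerable (hs : StronglySunflowerable.{u, v, w, x} L M) :
    Sunflowerable.{u, v, w, x} L M :=
  fun _ β Y _ hsize => hs β Y _ fun p hp => (hsize p hp).1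

theorem StronglySunflowerable.uncountable [Infinite M]
    (hs : StronglySunflowerable.{u, v, w, w} L M) : Uncountable M := by
  by_contra hcount
  have : Countable M := not_uncountable_iff.mp hcount
  obtain ⟨e⟩ : Nonempty (M ≃ ℕ) := nonempty_equiv_of_countable
  let _ : LinearOrder M := LinearOrder.lift' e e.injective
  obtain ⟨g, hg⟩ := hs.exists_embedding_isSunflower Set.Iic Set.Iic_injective fun m =>
    (Set.finite_Iic (e m)).preimage e.injective.injOn
  rw [Set.range_comp] at hg
  let f := Infinite.natEmbedding M
  have hgf := g.injective.comp f.injective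
  rcases hg.eq_or_eq_or_eq_of_Iic ⟨f 0, rfl⟩ ⟨f 1, rfl⟩ ⟨f 2, rfl⟩ with h | h | h <;>
    simpa using hgf h

theorem NSunflowerable.exists_embedding_comp_injective_or_const
    (hs : NSunflowerable.{u, v, w, max w x} L M 2) {ι : Type x} (P : M → ι) :
    ∃ g : M ↪[L] M, Function.Injective (P ∘ g) ∨ ∀ m m', P (g m) = P (g m') := by
  let h : M → Set (M ⊕ ι) := fun m => {Sum.inl m, Sum.inr (P m)}
  have hinj : Function.Injective h := fun m m' hmm => by
    have : (Sum.inl m : M ⊕ ι) ∈ h m' := hmm ▸ Set.mem_insert _ _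
    simpa [h] using this
  obtain ⟨g, r, hr⟩ := hs.exists_embedding_isSunflower h hinj fun m =>
    ⟨Set.toFinite _, Set.ncard_pair (by simp)⟩
  have hcore : ∀ m m', m ≠ m' → h (g m) ∩ h (g m') = r := fun m m' hne =>
    hr _ ⟨m, rfl⟩ _ ⟨m', rfl⟩ (hinj.ne (g.injective.ne hne))
  refine ⟨g, or_iff_not_imp_left.2 fun hP => ?_⟩
  obtain ⟨a, b, hab, hne⟩ : ∃ a b, P (g a) = P (g b) ∧ a ≠ b := by
    simpa [Function.Injective] using hP
  have hmem : Sum.inr (P (g a)) ∈ r := hcore a b hne ▸ ⟨by simp [h], by simp [h, hab]⟩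
  have hconst : ∀ m, P (g a) = P (g m) := by
    intro m
    rcases eq_or_ne m a with rfl | hma
    · rfl
    · rw [← hcore m a hma] at hmem
      simpa [h] using hmem.1
  exact fun m m' => (hconst m).symm.trans (hconst m')

theorem Sunflowerable.stronglySunflowerable [Uncountable M]
    (hs : Sunflowerable.{u, v, w, w} L M) : StronglySunflowerable.{u, v, w, w} L M := by
  intro β Y _ hfin ⟨e⟩
  obtain ⟨g₀, hg₀⟩ := (hs 2).exists_embedding_comp_injective_or_const
    fun m => (e m : Set β).ncard
  have hconst := hg₀.resolve_left fun hinj => not_countable hinj.countable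
  obtain ⟨m₀⟩ : Nonempty M := inferInstance
  obtain ⟨g, hg⟩ := (hs (e (g₀ m₀) : Set β).ncard).exists_embedding_isSunflower
    (fun m => e (g₀ m)) (Subtype.val_injective.comp (e.injective.comp g₀.injective))
    fun m => ⟨hfin _ (e (g₀ m)).2, hconst m m₀⟩
  refine ⟨e.toEmbedding.comp (g₀.comp g), ?_⟩
  rwa [← Set.range_comp]

/-- An infinite structure is strongly sunflowerable iff it is sunflowerable and
uncountable. -/
theorem stronglySunflowerable_iff (L : FirstOrder.Language.{u, v}) (M : Type w) [L.Structure M]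
    [Infinite M] :
    StronglySunflowerable.{u, v, w, w} L M ↔
      (Sunflowerable.{u, v, w, w} L M ∧ Uncountable M) :=
  ⟨fun hs => ⟨hs.sunflowerable, hs.uncountable⟩,
    fun ⟨hs, _⟩ => hs.stronglySunflowerable⟩

end StructuredSunflowers
end

section
/- Suppose M is an infinite L-structure with universal duplication of ω-quantifier-free types, and f is an n-ary function symbol of L. Then for all a₀,...,a_{n−1} ∈ M, f^M(a₀,...,a_{n−1}) ∈ {a₀,...,a_{n−1}}; that is, every function of M is a choice function. -/
open FirstOrder Cardinal

universe u v w x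

namespace StructuredSunflowers

variable (L : FirstOrder.Language.{u, v})

open Language in
theorem setOf_sameQFTypeExt_realize_eq_singleton {M : Type w} [L.Structure M] {ι : Type*}
    (a : ι → M) (t : L.Term ι) : {b : M | SameQFTypeExt L a a (t.realize a) b} = {t.realize a} := by
  ext b
  refine ⟨fun hb => ?_, fun hb => hb ▸ fun _ _ => Iff.rfl⟩
  have h_eq := hb ((t.relabel Sum.inl).equal (Term.var (Sum.inr ())))
    (BoundedFormula.IsAtomic.equal _ _).isQF
  simp only [Formula.realize_equal, Term.realize_relabel, Sum.elim_comp_inl,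
    Term.realize_var, Sum.elim_inr, true_iff] at h_eq
  exact h_eq.symm

/-- In an infinite structure with universal duplication of ω-quantifier-free types,
every function is a choice function. -/
theorem funMap_mem_range_of_univDupQF (L : FirstOrder.Language.{u, v}) (M : Type w) [L.Structure M]
    [Infinite M] (h : UnivDupQF L M) (n : ℕ) (f : L.Functions n) (a : Fin n → M) :
    Language.Structure.funMap f a ∈ Set.range a := by
  by_contra hx
  obtain ⟨g, hg⟩ := h n a _ hx
  have h_range : Set.range g ⊆ {Language.Structure.funMap f a} :=
    hg.trans (setOf_sameQFTypeExt_realize_eq_singleton L a (.func f .var)).subset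
  exact Function.not_injective_const (Set.range_subset_singleton.mp h_range ▸ g.injective)

end StructuredSunflowers
end

section
/- Suppose M is an L-structure whose cardinality |M| is an infinite regular cardinal, and M is indivisible, ultrahomogeneous, and has universal duplication of quantifier-free types. Then M is sunflowerable: for every n ∈ ω, every isomorphic copy of M whose underlying set consists of n-element sets contains a substructure isomorphic to M whose underlying set is a sunflower. -/
open FirstOrder Cardinal

universe u v w x

namespace StructuredSunflowers

variable (L : FirstOrder.Language.{u, v})

/-! By induction on `n`. If one point lies in every set of some copy of `M`, remove it and
recurse: the core of the sunflower grows by that point. Otherwise we build a copy whose sets are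
pairwise disjoint by a transfinite back-and-forth along a well-order of `M` of type `|M|`. At each
stage, ultrahomogeneity gives a realization `y` of the required type over the elements chosen so
far, and universal duplication a whole copy of `M` inside the realizations of `qftp(a̅, y)`.
Colour each element of that copy by a previously used point its set contains, if any;
by regularity there are fewer than `|M|` such points, so indivisibility yields a monochromatic
copy. No point is common to a whole copy, so the colour is "none": those sets avoid all earlier
ones. -/

open FirstOrder.Language FirstOrder.Language.Structure Set

section

variable {L} {M : Type w} [L.Structure M] {ι κ : Type*} {α : Type*} [LinearOrder α] {β : Type w}

theorem SameQFType.comp {a b : ι → M} (h : SameQFType L a b) (f : κ → ι) :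
    SameQFType L (a ∘ f) (b ∘ f) := fun φ hφ => by
  simpa only [Formula.realize_relabel] using h (φ.relabel f) (hφ.relabel _)

theorem _root_.FirstOrder.Language.BoundedFormula.IsQF.restrictFreeVar [DecidableEq ι] {n : ℕ}
    {φ : L.BoundedFormula ι n}
    (hφ : φ.IsQF) (f : φ.freeVarFinset → κ) : (φ.restrictFreeVar f).IsQF := by
  induction hφ with
  | falsum => exact BoundedFormula.isQF_bot
  | of_isAtomic h =>
    cases h with
    | equal => exact (BoundedFormula.IsAtomic.equal _ _).isQF
    | rel => exact (BoundedFormula.IsAtomic.rel _ _).isQF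
  | imp _ _ ih₁ ih₂ => exact (ih₁ _).imp (ih₂ _)

theorem SameQFType.of_forall_finset {a b : ι → M}
    (h : ∀ s : Finset ι, SameQFType L (fun i : s => a i) (fun i : s => b i)) :
    SameQFType L a b := by
  classical
  intro φ hφ
  have hrestrict := h φ.freeVarFinset _ (hφ.restrictFreeVar id)
  have realize_iff (c : ι → M) :
      φ.Realize c ↔ Formula.Realize (φ.restrictFreeVar id) (fun i => c i) :=
    (BoundedFormula.realize_restrictFreeVar (φ := φ) (f := id)
      (v := fun i : φ.freeVarFinset => c i) (xs := default) c fun _ => rfl).symm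
  rwa [realize_iff a, realize_iff b]

theorem SameQFTypeExt.trans {a b c : ι → M} {x y z : M} (h₁ : SameQFTypeExt L a b x y)
    (h₂ : SameQFTypeExt L b c y z) : SameQFTypeExt L a c x z :=
  fun φ hφ => (h₁ φ hφ).trans (h₂ φ hφ)

theorem SameQFTypeExt.notMem_range {a b : ι → M} {x y : M} (h : SameQFTypeExt L a b x y)
    (hx : x ∉ range a) : y ∉ range b := by
  rintro ⟨i, rfl⟩
  refine hx ⟨i, ?_⟩
  simpa using (h (Term.equal (Term.var (Sum.inl i)) (Term.var (Sum.inr ())))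
    (BoundedFormula.IsAtomic.equal _ _).isQF).2 rfl

theorem exists_embedding_of_sameQFType_id {g : M → M} (h : SameQFType L id g) :
    ∃ e : M ↪[L] M, ⇑e = g := by
  have hinj : g.Injective := fun x y hxy => by
    simpa using (h (Term.equal (Term.var x) (Term.var y))
      (BoundedFormula.IsAtomic.equal _ _).isQF).2 hxy
  refine ⟨⟨⟨g, hinj⟩, fun {n} f xs => ?_, fun {n} r xs => ?_⟩, rfl⟩
  · simpa [Function.comp_def] using (h (Term.equal (Term.func f fun i => Term.var (xs i))
      (Term.var (funMap f xs))) (BoundedFormula.IsAtomic.equal _ _).isQF).1 rfl |>.symm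
  · simpa [Function.comp_def] using (h (r.formula fun i => Term.var (xs i))
      (BoundedFormula.IsAtomic.rel _ _).isQF).symm

theorem sameQFType_restrict_of_forall_sameQFTypeExt {z m : α → M} (S : Set α)
    (h : ∀ w ∈ S, SameQFTypeExt L (fun v : Iio w => z v) (fun v : Iio w => m v) (z w) (m w)) :
    SameQFType L (fun v : S => z v) (fun v : S => m v) := by
  -- a finite set of indices lies in `Iio w ∪ {w}` for its maximum `w`
  refine SameQFType.of_forall_finset fun s => ?_
  rcases s.eq_empty_or_nonempty with rfl | hs
  · intro φ _
    rw [Subsingleton.elim (fun i : (∅ : Finset S) => z i) fun i => m i]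
  set w := s.max' hs
  let f : s → Iio (w : α) ⊕ Unit := fun i =>
    if hi : (i : α) < w then Sum.inl ⟨i, hi⟩ else Sum.inr ()
  have hf (c : α → M) :
      (fun i : s => c i) = Sum.elim (fun v : Iio (w : α) => c v) (fun _ => c w) ∘ f := by
    funext i
    simp only [f, Function.comp_apply]
    split_ifs with hi
    · rfl
    · rw [Sum.elim_inr, le_antisymm (s.le_max' i i.2) (not_lt.1 hi)]
  rw [hf z, hf m]
  exact SameQFType.comp (h w w.2) f

theorem exists_sameQFType_of_forall_extend [WellFoundedLT α] (z : α → M)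
    (P : ∀ w : α, (Iio w → M) → M → Prop)
    (hstep : ∀ w (m : Iio w → M), SameQFType L (fun v : Iio w => z v) m →
      ∃ y, SameQFTypeExt L (fun v : Iio w => z v) m (z w) y ∧ P w m y) :
    ∃ m : α → M, SameQFType L z m ∧ ∀ w, P w (fun v : Iio w => m v) (m w) := by
  -- made total, so that it can drive a well-founded recursion
  have hstep' : ∀ w (m : Iio w → M), ∃ y, SameQFType L (fun v : Iio w => z v) m →
      SameQFTypeExt L (fun v : Iio w => z v) m (z w) y ∧ P w m y := fun w m =>
    (em _).elim (fun hm => (hstep w m hm).imp fun _ hy _ => hy)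
      fun hm => ⟨z w, fun h => (hm h).elim⟩
  choose next hnext using hstep'
  let m : α → M := WellFoundedLT.fix fun w prev => next w fun v => prev v v.2
  have hm (w : α) : m w = next w fun v : Iio w => m v := WellFoundedLT.fix_eq _ w
  have good (w : α) : SameQFTypeExt L (fun v : Iio w => z v) (fun v : Iio w => m v) (z w) (m w) ∧
      P w (fun v : Iio w => m v) (m w) := by
    induction w using WellFoundedLT.induction with
    | _ w ih =>
      rw [hm w]
      exact hnext w _ (sameQFType_restrict_of_forall_sameQFTypeExt _ fun v hv => (ih v hv).1)
  refine ⟨m, ?_, fun w => (good w).2⟩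
  exact (sameQFType_restrict_of_forall_sameQFTypeExt univ fun w _ => (good w).1).comp
    fun a => ⟨a, mem_univ a⟩

theorem Indivisible.exists_disjoint (hind : Indivisible L M) (hM : ℵ₀ ≤ #M) {G : M → Set β}
    {U : Set β} (hU : #U < #M) (hG : ∀ b ∈ U, ¬∃ g : M ↪[L] M, ∀ x, b ∈ G (g x)) :
    ∃ x, Disjoint (G x) U := by
  classical
  have : Infinite M := infinite_iff.2 hM
  let c : M → Option U := fun x =>
    if h : (G x ∩ U).Nonempty then some ⟨h.some, h.some_mem.2⟩ else none
  have c_some {x : M} {b : U} (h : c x = some b) : (b : β) ∈ G x := by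
    simp only [c] at h
    split_ifs at h with hx
    cases h
    exact hx.some_mem.1
  have c_none {x : M} (h : c x = none) : Disjoint (G x) U := by
    simp only [c] at h
    split_ifs at h with hx
    exact disjoint_iff_inter_eq_empty.2 (not_nonempty_iff_eq_empty.1 hx)
  have hc : #(Option U) < #M := by
    rw [mk_option]
    exact add_lt_of_lt hM hU (one_lt_aleph0.trans_le hM)
  obtain ⟨i, g, hg⟩ := hind (Option U) (fun i => {x | c x = i}) hc
    fun x => ⟨c x, rfl, fun _ h => h.symm⟩
  have hgi (x : M) : c (g x) = i := hg (mem_range_self x)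
  cases i with
  | none => exact ⟨g (Classical.arbitrary M), c_none (hgi _)⟩
  | some b => exact (hG b b.2 ⟨g, fun x => c_some (hgi x)⟩).elim

theorem exists_sameQFTypeExt_disjoint (hreg : (#M).IsRegular) (hind : Indivisible L M)
    (hu : UltraHomog L M) (hdup : UnivDupQFAt L M (#M)) {F : M → Set β}
    (hfin : ∀ x, (F x).Finite) (hno : ∀ b, ¬∃ g : M ↪[L] M, ∀ x, b ∈ F (g x))
    {ι : Type w} (hι : #ι < #M) {a b : ι → M}
    (hab : SameQFType L a b) {x : M} (hx : x ∉ range a) :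
    ∃ y, SameQFTypeExt L a b x y ∧ ∀ i, Disjoint (F (b i)) (F y) := by
  obtain ⟨y, hy⟩ := hu ι hι a b hab x
  obtain ⟨e, he⟩ := hdup ι hι b y (hy.notMem_range hx)
  have hU : #(⋃ i, F (b i)) < #M := (card_iUnion_lt_iff_forall_of_isRegular hreg hι).2
    fun i => (hfin _).lt_aleph0.trans_le hreg.aleph0_le
  obtain ⟨x', hx'⟩ := hind.exists_disjoint hreg.aleph0_le hU (G := F ∘ e)
    fun c _ ⟨g, hg⟩ => hno c ⟨e.comp g, hg⟩
  exact ⟨e x', hy.trans (he (mem_range_self x')),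
    fun i => (hx'.mono_right (subset_iUnion _ i)).symm⟩

theorem exists_embedding_pairwise_disjoint (hreg : (#M).IsRegular) (hind : Indivisible L M)
    (hu : UltraHomog L M) (hdup : UnivDupQFAt L M (#M)) {F : M → Set β}
    (hfin : ∀ x, (F x).Finite) (hno : ∀ b, ¬∃ g : M ↪[L] M, ∀ x, b ∈ F (g x)) :
    ∃ g : M ↪[L] M, Pairwise fun x y => Disjoint (F (g x)) (F (g y)) := by
  obtain ⟨z⟩ : Nonempty ((#M).ord.ToType ≃ M) := Cardinal.eq.1 (mk_ord_toType _)
  obtain ⟨m, hzm, hm⟩ := exists_sameQFType_of_forall_extend z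
    (fun w m y => ∀ v, Disjoint (F (m v)) (F y)) fun w m hm =>
      exists_sameQFTypeExt_disjoint hreg hind hu hdup hfin hno
        (by simpa using mk_Iio_lt w) hm fun ⟨v, hv⟩ => v.2.ne (z.injective hv)
  obtain ⟨g, hg⟩ := exists_embedding_of_sameQFType_id (g := m ∘ z.symm)
    (by simpa only [z.self_comp_symm] using hzm.comp z.symm)
  refine ⟨g, fun x y hxy => ?_⟩
  simp only [hg, Function.comp_apply]
  rcases lt_or_gt_of_ne (z.symm.injective.ne hxy) with h | h
  · exact hm _ ⟨_, h⟩
  · exact (hm _ ⟨_, h⟩).symm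

theorem exists_embedding_sunflower (hreg : (#M).IsRegular) (hind : Indivisible L M)
    (hu : UltraHomog L M) (hdup : UnivDupQFAt L M (#M)) (n : ℕ) {F : M → Set β}
    (hfin : ∀ x, (F x).Finite) (hcard : ∀ x, (F x).ncard ≤ n) :
    ∃ (g : M ↪[L] M) (r : Set β), ∀ x y, F (g x) ≠ F (g y) → F (g x) ∩ F (g y) = r := by
  induction n generalizing F with
  | zero =>
    have hempty (x : M) : F x = ∅ := (ncard_eq_zero (hfin x)).1 (Nat.le_zero.1 (hcard x))
    exact ⟨Embedding.refl L M, ∅, fun x y hxy => (hxy (by rw [hempty, hempty])).elim⟩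
  | succ n ih =>
    by_cases hcommon : ∃ b, ∃ g₀ : M ↪[L] M, ∀ x, b ∈ F (g₀ x)
    · obtain ⟨b, g₀, hb⟩ := hcommon
      have hinsert (x : M) : insert b (F (g₀ x) \ {b}) = F (g₀ x) :=
        insert_sdiff_self_of_mem (hb x)
      obtain ⟨g, r, hr⟩ := ih (F := fun x => F (g₀ x) \ {b}) (fun x => (hfin _).sdiff)
        fun x => Nat.lt_succ_iff.1 <|
          (ncard_sdiff_singleton_lt_of_mem (hb x) (hfin _)).trans_le (hcard _)
      refine ⟨g₀.comp g, insert b r, fun x y hxy => ?_⟩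
      simp only [Embedding.comp_apply] at hxy ⊢
      rw [← hinsert (g x), ← hinsert (g y), ← insert_inter_distrib,
        hr x y fun h => hxy (by rw [← hinsert (g x), h, hinsert])]
    · obtain ⟨g, hg⟩ := exists_embedding_pairwise_disjoint hreg hind hu hdup hfin
        fun b hb => hcommon ⟨b, hb⟩
      exact ⟨g, ∅, fun x y hxy => (hg fun h => hxy (by rw [h])).inter_eq⟩

end

/-- An indivisible, ultrahomogeneous structure of infinite regular cardinality with
universal duplication of quantifier-free types is sunflowerable. -/
theorem sunflowerable_of_indivisible_ultrahomog (L : FirstOrder.Language.{u, v}) (M : Type w)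
    [L.Structure M] (hreg : (#M).IsRegular) (hind : Indivisible L M)
    (hu : UltraHomog L M) (hdup : UnivDupQFAt L M (#M)) :
    Sunflowerable.{u, v, w, w} L M := by
  intro n β Y _ hY ⟨e⟩
  obtain ⟨g, r, hr⟩ := exists_embedding_sunflower hreg hind hu hdup n
    (F := fun x => (e x : Set β)) (fun x => (hY _ (e x).2).1) fun x => (hY _ (e x).2).2.le
  refine ⟨e.toEmbedding.comp g, r, ?_⟩
  rintro _ ⟨_, ⟨x, rfl⟩, rfl⟩ _ ⟨_, ⟨y, rfl⟩, rfl⟩ hxy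
  exact hr x y hxy

end StructuredSunflowers
end

section
/- The generic K_n-free graph H_n (the countable ultrahomogeneous graph omitting complete subgraphs of size n, for n ≥ 3) does not have universal duplication of quantifier-free types: there exists a tuple a₀,...,a_{n−3} and an element a such that no subset of B_{a̅,a} = {b : qftp(a̅,a) = qftp(a̅,b)} induces a graph isomorphic to H_n. -/
open FirstOrder Cardinal

universe u v w x

namespace StructuredSunflowers

variable (L : FirstOrder.Language.{u, v})

/-!
Apply universal duplication to an `(n - 2)`-clique `a̅` and a vertex `x` completing it to an
`(n - 1)`-clique: every realization of `qftp(a̅, x)` is adjacent to all of `a̅`, so the graph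
embeds into the common neighbourhood of `a̅`. The extension property builds `(n - 1)`-cliques,
so for `n ≥ 3` the graph has an edge, and its image together with `a̅` is an `n`-clique.
-/

section Graph

variable {V : Type*} {G : SimpleGraph V}

theorem _root_.SimpleGraph.exists_isNClique_of_forall_card_lt {k : ℕ}
    (h : ∀ A : Finset V, A.card < k → ∃ v, ∀ a ∈ A, G.Adj v a) :
    ∃ K : Finset V, G.IsNClique k K := by
  classical
  induction k with
  | zero => exact ⟨∅, by simp⟩
  | succ k ih =>
    obtain ⟨K, hK⟩ := ih fun A hA => h A (by omega)
    obtain ⟨v, hv⟩ := h K (by rw [hK.card_eq]; omega)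
    exact ⟨insert v K, hK.insert hv⟩

theorem _root_.SimpleGraph.CliqueFree.not_adj_of_forall_adj {k : ℕ} (hG : G.CliqueFree (k + 2))
    {A : Finset V} (hA : G.IsNClique k A) {u w : V} (hu : ∀ a ∈ A, G.Adj a u)
    (hw : ∀ a ∈ A, G.Adj a w) : ¬ G.Adj u w := by
  classical
  intro huw
  have hwA : G.IsNClique (k + 1) (insert w A) := hA.insert fun a ha => (hw a ha).symm
  refine (hwA.insert (a := u) ?_).not_cliqueFree hG
  exact Finset.forall_mem_insert _ _ _ |>.2 ⟨huw, fun a ha => (hu a ha).symm⟩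

theorem adj_iff_of_sameQFTypeExt {ι : Type*} {a : ι → V} {x y : V}
    (h : letI := G.structure; SameQFTypeExt Language.graph a a x y) (i : ι) :
    G.Adj (a i) x ↔ G.Adj (a i) y := by
  let := G.structure
  exact h (Language.adj.formula₂ (.var (Sum.inl i)) (.var (Sum.inr ())))
    (Language.BoundedFormula.IsAtomic.rel _ _).isQF

theorem exists_hom_into_commonNeighbors_of_univDupQF
    (hdup : letI := G.structure; UnivDupQF Language.graph V) (A : Finset V) {x : V}
    (hx : x ∉ A) : ∃ f : G →g G, ∀ v, ∀ a ∈ A, G.Adj a x → G.Adj a (f v) := by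
  let := G.structure
  let a : Fin A.card → V := fun i => A.equivFin.symm i
  obtain ⟨g, hg⟩ := hdup A.card a x fun ⟨i, hi⟩ => hx (hi ▸ (A.equivFin.symm i).2)
  refine ⟨⟨g, fun {u w} huw => (g.map_rel Language.adj ![u, w]).2 huw⟩, fun v b hb hbx => ?_⟩
  have hb : a (A.equivFin ⟨b, hb⟩) = b := by simp [a]
  rw [← hb] at hbx ⊢
  exact (adj_iff_of_sameQFTypeExt (hg ⟨v, rfl⟩) _).1 hbx

end Graph

theorem hensonGraph_not_univDupQF_general (n : ℕ) (hn : 3 ≤ n) (V : Type u) (G : SimpleGraph V)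
    (hfree : G.CliqueFree n)
    (hext : ∀ A B : Finset V, Disjoint A B →
      (∀ t : Finset V, t ⊆ A → ¬ G.IsNClique (n - 1) t) →
      ∃ v : V, v ∉ A ∧ v ∉ B ∧ (∀ a ∈ A, G.Adj v a) ∧ (∀ b ∈ B, ¬ G.Adj v b)) :
    letI := G.structure
    ¬ UnivDupQF FirstOrder.Language.graph V := by
  classical
  intro hdup
  obtain ⟨K, hK⟩ : ∃ K : Finset V, G.IsNClique (n - 1) K := by
    refine SimpleGraph.exists_isNClique_of_forall_card_lt fun A hA => ?_
    obtain ⟨v, -, -, hv, -⟩ := hext A ∅ (Finset.disjoint_empty_right A) fun t ht htK => by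
      have := Finset.card_le_card ht
      have := htK.card_eq
      omega
    exact ⟨v, hv⟩
  obtain ⟨x, hx⟩ : K.Nonempty := Finset.card_pos.1 (by rw [hK.card_eq]; omega)
  set A := K.erase x
  have hA : G.IsNClique (n - 2) A := by simpa [Nat.sub_sub] using hK.erase_of_mem hx
  have hAx : ∀ a ∈ A, G.Adj a x := fun a ha =>
    hK.isClique (Finset.mem_of_mem_erase ha) hx (Finset.ne_of_mem_erase ha)
  obtain ⟨y, hy⟩ : A.Nonempty := Finset.card_pos.1 (by rw [hA.card_eq]; omega)
  obtain ⟨f, hf⟩ := exists_hom_into_commonNeighbors_of_univDupQF hdup A (K.notMem_erase x)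
  have hfree' : G.CliqueFree (n - 2 + 2) := by rwa [Nat.sub_add_cancel (by omega)]
  exact hfree'.not_adj_of_forall_adj hA (fun a ha => hf x a ha (hAx a ha))
    (fun a ha => hf y a ha (hAx a ha)) (f.map_adj (hAx y hy).symm)

/-- The generic `Kₙ`-free (Henson) graph does not have universal duplication of
quantifier-free types. -/
theorem hensonGraph_not_univDupQF (n : ℕ) (hn : 3 ≤ n) (V : Type u) [Countable V]
    [Infinite V] (G : SimpleGraph V) (hfree : G.CliqueFree n)
    (hext : ∀ A B : Finset V, Disjoint A B →
      (∀ t : Finset V, t ⊆ A → ¬ G.IsNClique (n - 1) t) →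
      ∃ v : V, v ∉ A ∧ v ∉ B ∧ (∀ a ∈ A, G.Adj v a) ∧ (∀ b ∈ B, ¬ G.Adj v b)) :
    letI := G.structure
    ¬ UnivDupQF FirstOrder.Language.graph V :=
  hensonGraph_not_univDupQF_general n hn V G hfree hext

end StructuredSunflowers
end

section
/- For every infinite cardinal κ, the class L_{∞,κ} (the closure of linear orders of size < κ under lexicographic sums indexed by linear orders of size < κ, by κ, and by κ*) equals the class of κ-scattered linear orders of size at most κ. In particular, every ordinal β < κ⁺ and its reverse β* belong to L_{∞,κ}. -/
/-!
Lexicographic sums of κ-scattered orders over κ-scattered indices are κ-scattered: a κ-dense set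
either meets one summand twice, and is then κ-dense in that summand between those two points, or
it projects injectively onto a κ-dense subset of the index. Small orders, `κ` and `κ*` are
κ-scattered, and the sums stay of size at most `κ`.

Conversely, call `x` and `y` condensed when every subset of the interval between them lies in
`L_{∞,κ}`. This is an equivalence relation with convex classes, and every class of an order of
size at most `κ` lies in `L_{∞,κ}`: split it at a point and write each half, through an
enumeration of order type `κ`, as a sum indexed by `κ` or `κ*` of pieces bounded within the
class. If there were two classes, a set of representatives would be κ-dense, since two classes
separated by fewer than `κ` classes are merged by condensation. So a κ-scattered order of size at
most `κ` is a single class.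
-/

open Cardinal

universe u

namespace StructuredSunflowers

/-- A subset `s` of a linear order is κ-dense if it has at least two elements and between
any two distinct elements of `s` there are exactly κ elements of `s`. -/
def KDense (κ : Cardinal.{u}) {α : Type u} [LinearOrder α] (s : Set α) : Prop :=
  2 ≤ #s ∧ ∀ a ∈ s, ∀ b ∈ s, a < b → #{c : α | c ∈ s ∧ a < c ∧ c < b} = κ

/-- A linear order is κ-scattered if it has no κ-dense suborder. -/
def KScattered (κ : Cardinal.{u}) (α : Type u) [LinearOrder α] : Prop :=
  ¬ ∃ s : Set α, KDense κ s

/-- The class `L_{∞,κ}`: the closure of the linear orders of size `< κ` under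
lexicographic sums indexed by linear orders of size `< κ`, by `κ`, and by `κ*`
(up to isomorphism). -/
inductive InLClass (κ : Cardinal.{u}) : ∀ (α : Type u), LinearOrder α → Prop
  | small (α : Type u) (instα : LinearOrder α) (h : #α < κ) : InLClass κ α instα
  | sum (ι : Type u) (instι : LinearOrder ι) (A : ι → Type u)
      (instA : ∀ i, LinearOrder (A i))
      (hι : #ι < κ ∨ Nonempty (ι ≃o κ.ord.ToType) ∨ Nonempty (ι ≃o (κ.ord.ToType)ᵒᵈ))
      (hA : ∀ i, InLClass κ (A i) (instA i)) :
      InLClass κ (Σₗ i, A i) inferInstance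
  | iso (α : Type u) (instα : LinearOrder α) (β : Type u) (instβ : LinearOrder β)
      (h : InLClass κ α instα) (e : α ≃o β) : InLClass κ β instβ

/-- A linear order `X` is `n`-sunflowerable if every isomorphic copy of `X` whose
underlying set consists of sets of size `n` contains a suborder isomorphic to `X`
whose underlying set is a sunflower. -/
def OrderNSunflowerable (X : Type u) [LinearOrder X] (n : ℕ) : Prop :=
  ∀ (β : Type u) (Y : Set (Set β)) (_ : LinearOrder Y),
    (∀ p ∈ Y, p.Finite ∧ p.ncard = n) → Nonempty (X ≃o Y) →
    ∃ g : X ↪o Y, IsSunflower ((fun z : Y => (z : Set β)) '' Set.range g)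

/-- A linear order is sunflowerable if it is `n`-sunflowerable for every `n`. -/
def OrderSunflowerable (X : Type u) [LinearOrder X] : Prop :=
  ∀ n : ℕ, OrderNSunflowerable X n

section KDense

variable {κ : Cardinal.{u}} {α β : Type u} [LinearOrder α] [LinearOrder β]

theorem KDense.exists_lt {s : Set α} (hs : KDense κ s) : ∃ a ∈ s, ∃ b ∈ s, a < b := by
  obtain ⟨a, b, hab⟩ := Cardinal.two_le_iff.1 hs.1
  rcases lt_or_gt_of_ne (Subtype.coe_ne_coe.2 hab) with h | h
  · exact ⟨a, a.2, b, b.2, h⟩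
  · exact ⟨b, b.2, a, a.2, h⟩

theorem kDense_image_iff {s : Set α} {f : α → β} (hf : StrictMonoOn f s) :
    KDense κ (f '' s) ↔ KDense κ s := by
  have hbetween : ∀ a ∈ s, ∀ b ∈ s, #{y | y ∈ f '' s ∧ f a < y ∧ y < f b} =
      #{c | c ∈ s ∧ a < c ∧ c < b} := by
    intro a ha b hb
    rw [← Cardinal.mk_image_eq_of_injOn _ _ (hf.injOn.mono fun c hc => hc.1)]
    refine congrArg (fun t : Set β => #t) (Set.ext fun y => ⟨?_, ?_⟩)
    · rintro ⟨⟨c, hc, rfl⟩, hac, hcb⟩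
      exact ⟨c, ⟨hc, (hf.lt_iff_lt ha hc).1 hac, (hf.lt_iff_lt hc hb).1 hcb⟩, rfl⟩
    · rintro ⟨c, ⟨hc, hac, hcb⟩, rfl⟩
      exact ⟨⟨c, hc, rfl⟩, hf ha hc hac, hf hc hb hcb⟩
  rw [KDense, KDense, Cardinal.mk_image_eq_of_injOn _ _ hf.injOn, Set.forall_mem_image]
  refine and_congr_right fun _ => forall₂_congr fun a ha => ?_
  rw [Set.forall_mem_image]
  exact forall₂_congr fun b hb => by rw [hf.lt_iff_lt ha hb, hbetween a ha b hb]

theorem KDense.inter_Icc {s : Set α} (hs : KDense κ s) {a b : α} (ha : a ∈ s) (hb : b ∈ s)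
    (hab : a < b) : KDense κ (s ∩ Set.Icc a b) := by
  refine ⟨Cardinal.two_le_iff.2 ⟨⟨a, ha, le_rfl, hab.le⟩, ⟨b, hb, hab.le, le_rfl⟩,
    fun h => hab.ne (congrArg Subtype.val h)⟩, fun c hc d hd hcd => ?_⟩
  rw [← hs.2 c hc.1 d hd.1 hcd]
  refine congrArg (fun t : Set α => #t) (Set.ext fun x => ⟨?_, ?_⟩)
  · exact fun ⟨hx, hcx, hxd⟩ => ⟨hx.1, hcx, hxd⟩
  · exact fun ⟨hx, hcx, hxd⟩ => ⟨⟨hx, hc.2.1.trans hcx.le, hxd.le.trans hd.2.2⟩, hcx, hxd⟩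

theorem KDense.ofDual {s : Set αᵒᵈ} (hs : KDense κ s) : KDense κ (OrderDual.toDual ⁻¹' s) :=
  ⟨hs.1, fun a ha b hb hab => by
    rw [← hs.2 _ hb _ ha hab]
    exact congrArg (fun t : Set α => #t) (Set.ext fun x => ⟨fun ⟨hx, hax, hxb⟩ => ⟨hx, hxb, hax⟩,
      fun ⟨hx, hbx, hxa⟩ => ⟨hx, hxa, hbx⟩⟩)⟩

end KDense

section KScattered

variable {κ : Cardinal.{u}} {α β : Type u} [LinearOrder α] [LinearOrder β]

theorem KScattered.of_orderEmbedding (f : α ↪o β) (h : KScattered κ β) : KScattered κ α :=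
  fun ⟨s, hs⟩ => h ⟨f '' s, (kDense_image_iff (f.strictMono.strictMonoOn s)).2 hs⟩

theorem KScattered.dual (h : KScattered κ α) : KScattered κ αᵒᵈ :=
  fun ⟨_, hs⟩ => h ⟨_, hs.ofDual⟩

theorem kScattered_of_mk_lt (h : #α < κ) : KScattered κ α := fun ⟨s, hs⟩ => by
  obtain ⟨a, ha, b, hb, hab⟩ := hs.exists_lt
  exact (hs.2 a ha b hb hab ▸ Cardinal.mk_set_le _).not_gt h

theorem kScattered_of_wellFoundedLT (hκ : κ ≠ 0) [WellFoundedLT α] : KScattered κ α :=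
  fun ⟨s, hs⟩ => by
  obtain ⟨a, ha, b, hb, hab⟩ := hs.exists_lt
  obtain ⟨m, ⟨hm, ham⟩, hmin⟩ := wellFounded_lt.has_min {t | t ∈ s ∧ a < t} ⟨b, hb, hab⟩
  refine hκ (hs.2 a ha m hm ham ▸ Cardinal.mk_eq_zero_iff.2 ⟨fun ⟨c, hc, hac, hcm⟩ => ?_⟩)
  exact hmin c ⟨hc, hac⟩ hcm

theorem kScattered_of_wellFoundedGT (hκ : κ ≠ 0) [WellFoundedGT α] : KScattered κ α :=
  (kScattered_of_wellFoundedLT (α := αᵒᵈ) hκ).dual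

theorem KScattered.sigmaLex {ι : Type u} [LinearOrder ι] {A : ι → Type u}
    [∀ i, LinearOrder (A i)] (hι : KScattered κ ι) (hA : ∀ i, KScattered κ (A i)) :
    KScattered κ (Σₗ i, A i) := by
  rintro ⟨s, hs⟩
  have hfst : Monotone fun p : Σₗ i, A i => p.1 := fun p q hpq => by
    rcases Sigma.Lex.le_def.1 hpq with h | ⟨h, -⟩
    exacts [h.le, h.le]
  by_cases hinj : s.InjOn fun p : Σₗ i, A i => p.1
  · exact hι ⟨_, (kDense_image_iff ((hfst.monotoneOn s).strictMonoOn_of_injOn hinj)).2 hs⟩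
  obtain ⟨p, hp, q, hq, hpq_fst, hpq⟩ : ∃ p ∈ s, ∃ q ∈ s, p.1 = q.1 ∧ p < q := by
    simp only [Set.InjOn, not_forall] at hinj
    obtain ⟨p, hp, q, hq, h, hne⟩ := hinj
    rcases lt_or_gt_of_ne hne with hlt | hlt
    exacts [⟨p, hp, q, hq, h, hlt⟩, ⟨q, hq, p, hp, h.symm, hlt⟩]
  obtain ⟨i, x⟩ := p
  let f : A i ↪o Σₗ i, A i :=
    OrderEmbedding.ofStrictMono (fun a => toLex ⟨i, a⟩) fun a b h => Sigma.Lex.right _ _ h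
  refine hA i ⟨f ⁻¹' (s ∩ Set.Icc (toLex ⟨i, x⟩) q), ?_⟩
  refine (kDense_image_iff (f.strictMono.strictMonoOn _)).1 ?_
  rw [Set.image_preimage_eq_of_subset]
  · exact hs.inter_Icc hp hq hpq
  rintro c ⟨-, hpc, hcq⟩
  have hc : c.1 = i := le_antisymm ((hfst hcq).trans_eq hpq_fst.symm) (hfst hpc)
  obtain ⟨j, y⟩ := c
  subst hc
  exact ⟨y, rfl⟩

end KScattered

def IsLSumIndex (κ : Cardinal.{u}) (ι : Type u) [LinearOrder ι] : Prop :=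
  #ι < κ ∨ Nonempty (ι ≃o κ.ord.ToType) ∨ Nonempty (ι ≃o (κ.ord.ToType)ᵒᵈ)

namespace IsLSumIndex

variable {κ : Cardinal.{u}} {ι : Type u} [LinearOrder ι]

theorem mk_le (h : IsLSumIndex κ ι) : #ι ≤ κ := by
  rcases h with h | ⟨⟨e⟩⟩ | ⟨⟨e⟩⟩
  · exact h.le
  · rw [Cardinal.mk_congr e.toEquiv, Cardinal.mk_toType, Cardinal.card_ord]
  · rw [Cardinal.mk_congr (e.toEquiv.trans OrderDual.ofDual), Cardinal.mk_toType,
      Cardinal.card_ord]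

theorem kScattered (hκ : κ ≠ 0) (h : IsLSumIndex κ ι) : KScattered κ ι := by
  rcases h with h | ⟨⟨e⟩⟩ | ⟨⟨e⟩⟩
  · exact kScattered_of_mk_lt h
  · exact (kScattered_of_wellFoundedLT hκ).of_orderEmbedding e.toOrderEmbedding
  · exact (kScattered_of_wellFoundedGT hκ).of_orderEmbedding e.toOrderEmbedding

theorem dual (h : IsLSumIndex κ ι) : IsLSumIndex κ ιᵒᵈ := by
  rcases h with h | ⟨⟨e⟩⟩ | ⟨⟨e⟩⟩
  · exact Or.inl h
  · exact Or.inr (Or.inr ⟨e.dual⟩)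
  · exact Or.inr (Or.inl ⟨e.dual.trans (OrderIso.dualDual _).symm⟩)

end IsLSumIndex

namespace InLClass

variable {κ : Cardinal.{u}}

theorem kScattered_and_mk_le (hκ : ℵ₀ ≤ κ) {α : Type u} {instα : LinearOrder α}
    (h : InLClass κ α instα) : KScattered κ α ∧ #α ≤ κ := by
  induction h with
  | small α instα h => exact ⟨kScattered_of_mk_lt h, h.le⟩
  | sum ι instι A instA hι hA ih =>
    have hι : IsLSumIndex κ ι := hι
    refine ⟨(hι.kScattered (ne_bot_of_le_ne_bot Cardinal.aleph0_ne_zero hκ)).sigmaLex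
      fun i => (ih i).1, ?_⟩
    calc #(Σₗ i, A i) = Cardinal.sum fun i => #(A i) := Cardinal.mk_sigma A
      _ ≤ #ι * ⨆ i, #(A i) := Cardinal.sum_le_mk_mul_iSup _
      _ ≤ κ * κ := mul_le_mul' hι.mk_le (ciSup_le' fun i => (ih i).2)
      _ = κ := Cardinal.mul_eq_self hκ
  | iso α instα β instβ h e ih =>
    exact ⟨ih.1.of_orderEmbedding e.symm.toOrderEmbedding, Cardinal.mk_congr e.toEquiv ▸ ih.2⟩

theorem dual {α : Type u} {instα : LinearOrder α} (h : InLClass κ α instα) :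
    InLClass κ αᵒᵈ inferInstance := by
  induction h with
  | small α instα h => exact small αᵒᵈ _ h
  | sum ι instι A instA hι hA ih =>
    refine iso _ _ _ _ (sum ιᵒᵈ _ (fun i => (A (OrderDual.ofDual i))ᵒᵈ) _
      (IsLSumIndex.dual hι) fun i => ih (OrderDual.ofDual i)) ?_
    refine StrictMono.orderIsoOfSurjective
      (fun p => OrderDual.toDual (toLex ⟨OrderDual.ofDual p.1, OrderDual.ofDual p.2⟩))
      (fun p q hpq => ?_) fun x => ⟨toLex ⟨OrderDual.toDual (ofLex (OrderDual.ofDual x)).1,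
        OrderDual.toDual (ofLex (OrderDual.ofDual x)).2⟩, rfl⟩
    rcases Sigma.Lex.lt_def.1 hpq with h | ⟨h, h'⟩
    · exact Sigma.Lex.lt_def.2 (Or.inl h)
    · obtain ⟨i, x⟩ := p
      obtain ⟨j, y⟩ := q
      cases h
      exact Sigma.Lex.lt_def.2 (Or.inr ⟨rfl, h'⟩)
  | iso α instα β instβ h e ih => exact iso _ _ _ _ ih e.dual

end InLClass

section Glue

variable {κ : Cardinal.{u}} {α : Type u} [LinearOrder α]

theorem inLClass_iUnion {ι : Type u} [LinearOrder ι] (hι : IsLSumIndex κ ι) {f : ι → Set α}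
    (hf : ∀ i j, i < j → ∀ x ∈ f i, ∀ y ∈ f j, x < y) (hL : ∀ i, InLClass κ (f i) inferInstance) :
    InLClass κ ↥(⋃ i, f i) inferInstance := by
  refine InLClass.iso _ _ _ _ (InLClass.sum ι _ _ _ hι hL) (StrictMono.orderIsoOfSurjective
    (fun p => ⟨p.2, Set.mem_iUnion.2 ⟨p.1, p.2.2⟩⟩) (fun p q hpq => ?_) ?_)
  · rcases Sigma.Lex.lt_def.1 hpq with h | ⟨h, h'⟩
    · exact hf _ _ h _ p.2.2 _ q.2.2
    · obtain ⟨i, x⟩ := p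
      obtain ⟨j, y⟩ := q
      cases h
      exact h'
  · rintro ⟨x, hx⟩
    obtain ⟨i, hi⟩ := Set.mem_iUnion.1 hx
    exact ⟨toLex ⟨i, x, hi⟩, rfl⟩

theorem inLClass_union (hκ : ℵ₀ ≤ κ) {s t : Set α} (hst : ∀ x ∈ s, ∀ y ∈ t, x < y)
    (hs : InLClass κ s inferInstance) (ht : InLClass κ t inferInstance) :
    InLClass κ ↥(s ∪ t) inferInstance := by
  have hι : IsLSumIndex κ (ULift.{u} Bool) :=
    Or.inl (by simpa using (Cardinal.natCast_lt_aleph0 (n := 2)).trans_le hκ)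
  have h := inLClass_iUnion hι (f := fun i => bif i.down then t else s)
    (fun ⟨i⟩ ⟨j⟩ hij => by
      obtain ⟨rfl, rfl⟩ := Bool.lt_iff.1 hij
      exact hst) (by
      rintro ⟨⟨⟩⟩
      exacts [hs, ht])
  rwa [ULift.down_surjective.iUnion_comp (fun b => bif b then t else s), ← Set.union_eq_iUnion,
    Set.union_comm] at h

theorem inLClass_of_subsingleton (hκ : ℵ₀ ≤ κ) {s : Set α} (hs : s.Subsingleton) :
    InLClass κ s inferInstance :=
  InLClass.small _ _ ((Cardinal.mk_le_one_iff_set_subsingleton.2 hs).trans_lt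
    (Cardinal.one_lt_aleph0.trans_le hκ))

-- `(↥s)ᵒᵈ` and `↥(ofDual ⁻¹' s)` are the same order up to definitional unfolding.
theorem inLClass_preimage_ofDual_iff {s : Set α} :
    InLClass κ ↥(OrderDual.ofDual ⁻¹' s : Set αᵒᵈ) inferInstance ↔ InLClass κ s inferInstance :=
  ⟨fun h => InLClass.iso _ _ _ _ h.dual ⟨Equiv.refl _, Iff.rfl⟩,
    fun h => InLClass.iso _ _ _ _ h.dual ⟨Equiv.refl _, Iff.rfl⟩⟩

end Glue

section Cofinal

variable {κ : Cardinal.{u}} {α : Type u} [LinearOrder α]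

/-- Enumerate `U` by `v` in order type `κ`; the `i`-th piece consists of the points of `U` lying
above all earlier values and below `v i`, so it is bounded above in `U`. -/
theorem inLClass_of_forall_Iic (hκ : ℵ₀ ≤ κ) {U : Set α} (hU : #U ≤ κ)
    (h : ∀ a ∈ U, ∀ t ⊆ U ∩ Set.Iic a, InLClass κ t inferInstance) :
    InLClass κ U inferInstance := by
  rcases U.eq_empty_or_nonempty with rfl | hne
  · exact inLClass_of_subsingleton hκ Set.subsingleton_empty
  have : Nonempty U := hne.to_subtype
  obtain ⟨g⟩ : Nonempty (U ↪ κ.ord.ToType) := by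
    rwa [← Cardinal.le_def, Cardinal.mk_toType, Cardinal.card_ord]
  let v : κ.ord.ToType → α := fun i => (Function.invFun g i : U)
  let f : κ.ord.ToType → Set α := fun i => {t | t ∈ U ∧ t ≤ v i ∧ ∀ j < i, v j < t}
  have hcover : ⋃ i, f i = U := by
    refine Set.Subset.antisymm (Set.iUnion_subset fun i t ht => ht.1) fun t ht => ?_
    obtain ⟨m, hm, hmin⟩ := wellFounded_lt.has_min {i | t ≤ v i}
      (by
        obtain ⟨i, hi⟩ := Function.invFun_surjective g.injective ⟨t, ht⟩
        exact ⟨i, (congrArg Subtype.val hi).ge⟩)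
    exact Set.mem_iUnion.2 ⟨m, ht, hm, fun j hj => not_le.1 fun h => hmin j h hj⟩
  rw [← hcover]
  refine inLClass_iUnion (Or.inr (Or.inl ⟨OrderIso.refl _⟩))
    (fun i j hij x hx y hy => hx.2.1.trans_lt (hy.2.2 i hij)) fun i => ?_
  exact h (v i) (Function.invFun g i).2 _ fun t ht => ⟨ht.1, ht.2.1⟩

theorem inLClass_of_forall_Ici (hκ : ℵ₀ ≤ κ) {U : Set α} (hU : #U ≤ κ)
    (h : ∀ a ∈ U, ∀ t ⊆ U ∩ Set.Ici a, InLClass κ t inferInstance) :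
    InLClass κ U inferInstance :=
  inLClass_preimage_ofDual_iff.1 <| inLClass_of_forall_Iic (α := αᵒᵈ) hκ hU fun a ha t ht =>
    inLClass_preimage_ofDual_iff.2 (h (OrderDual.ofDual a) ha (OrderDual.toDual ⁻¹' t) ht)

theorem inLClass_of_forall_Icc (hκ : ℵ₀ ≤ κ) {C : Set α} (hC : #C ≤ κ)
    (h : ∀ a ∈ C, ∀ b ∈ C, ∀ t ⊆ C ∩ Set.Icc a b, InLClass κ t inferInstance) :
    InLClass κ C inferInstance := by
  rcases C.eq_empty_or_nonempty with rfl | ⟨c, hc⟩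
  · exact inLClass_of_subsingleton hκ Set.subsingleton_empty
  have hcard : ∀ s : Set α, #↥(C ∩ s) ≤ κ := fun s =>
    (Cardinal.mk_le_mk_of_subset Set.inter_subset_left).trans hC
  rw [← Set.inter_union_compl C (Set.Iio c), Set.compl_Iio]
  refine inLClass_union hκ (fun x hx y hy => hx.2.trans_le hy.2) ?_ ?_
  · exact inLClass_of_forall_Ici hκ (hcard _) fun a ha t ht =>
      h a ha.1 c hc t fun x hx => ⟨(ht hx).1.1, (ht hx).2, (ht hx).1.2.le⟩
  · exact inLClass_of_forall_Iic hκ (hcard _) fun a ha t ht =>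
      h c hc a ha.1 t fun x hx => ⟨(ht hx).1.1, (ht hx).1.2, (ht hx).2⟩

end Cofinal

section Condensation

variable {κ : Cardinal.{u}} {α : Type u} [LinearOrder α] {x y z : α}

/-- The condensation relation. Asking for every subset of `[[x, y]]`, rather than only its convex
ones, spares all convexity bookkeeping; the two versions agree a posteriori. -/
def LCondensed (κ : Cardinal.{u}) (x y : α) : Prop :=
  ∀ s ⊆ Set.uIcc x y, InLClass κ s inferInstance

theorem lCondensed_refl (hκ : ℵ₀ ≤ κ) (x : α) : LCondensed κ x x := fun _ hs =>
  inLClass_of_subsingleton hκ (Set.subsingleton_singleton.anti (hs.trans Set.uIcc_self.le))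

theorem LCondensed.symm (h : LCondensed κ x y) : LCondensed κ y x := fun s hs =>
  h s (Set.uIcc_comm x y ▸ hs)

theorem LCondensed.of_mem_uIcc (h : LCondensed κ x y) (hz : z ∈ Set.uIcc x y) :
    LCondensed κ x z := fun s hs =>
  h s (hs.trans (Set.uIcc_subset_uIcc Set.left_mem_uIcc hz))

theorem LCondensed.trans (hκ : ℵ₀ ≤ κ) (hxy : LCondensed κ x y) (hyz : LCondensed κ y z) :
    LCondensed κ x z := by
  wlog hxz : x ≤ z generalizing x z
  · exact (this hyz.symm hxy.symm (le_of_not_ge hxz)).symm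
  intro s hs
  rw [Set.uIcc_of_le hxz] at hs
  rw [← Set.inter_union_compl s (Set.Iic y), Set.compl_Iic]
  refine inLClass_union hκ (fun a ha b hb => ha.2.trans_lt hb.2) ?_ ?_
  · exact hxy _ fun a ha => Set.Icc_subset_uIcc ⟨(hs ha.1).1, ha.2⟩
  · exact hyz _ fun a ha => Set.Icc_subset_uIcc ⟨ha.2.le, (hs ha.1).2⟩

theorem lt_of_not_lCondensed (hκ : ℵ₀ ≤ κ) {c d : α} (hxy : ¬LCondensed κ x y) (hlt : x < y)
    (hc : LCondensed κ x c) (hd : LCondensed κ y d) : c < d := by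
  by_contra! hdc
  rcases le_or_gt x d with hxd | hdx
  · exact hxy ((hc.of_mem_uIcc (Set.mem_uIcc_of_le hxd hdc)).trans hκ hd.symm)
  · exact hxy (hd.of_mem_uIcc (Set.mem_uIcc_of_ge hdx.le hlt.le)).symm

theorem eq_of_lCondensed_of_mem_range (hκ : ℵ₀ ≤ κ) {r : α → α}
    (hr : ∀ x, LCondensed κ x (r x)) (hr_eq : ∀ x y, LCondensed κ x y → r x = r y)
    (hx : x ∈ Set.range r) (hy : y ∈ Set.range r) (hxy : LCondensed κ x y) : x = y := by
  obtain ⟨x, rfl⟩ := hx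
  obtain ⟨y, rfl⟩ := hy
  exact hr_eq _ _ (((hr x).trans hκ hxy).trans hκ (hr y).symm)

/-- Every subset of `[a, b]` is the sum, over the fewer than `κ` classes it meets, of its traces on
single classes. -/
theorem lCondensed_of_mk_between_lt (hκ : ℵ₀ ≤ κ) (hα : #α ≤ κ) {r : α → α}
    (hr : ∀ x, LCondensed κ x (r x)) (hr_eq : ∀ x y, LCondensed κ x y → r x = r y) {a b : α}
    (hab : a ≤ b) (hlt : #{c | c ∈ Set.range r ∧ a < c ∧ c < b} < κ) : LCondensed κ a b := by
  intro t ht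
  rw [Set.uIcc_of_le hab] at ht
  let f : r '' t → Set α := fun w => {x | x ∈ t ∧ r x = w}
  have hf : ∀ w, ∀ x ∈ f w, LCondensed κ (w : α) x := by
    rintro w x ⟨-, hx⟩
    exact hx ▸ (hr x).symm
  have hcover : ⋃ w, f w = t := Set.Subset.antisymm (Set.iUnion_subset fun w x hx => hx.1)
    fun x hx => Set.mem_iUnion.2 ⟨⟨r x, x, hx, rfl⟩, hx, rfl⟩
  rw [← hcover]
  refine inLClass_iUnion (Or.inl ?_) (fun w w' hww' x hx y hy => ?_) fun w => ?_
  · have hsub : r '' t ⊆ insert (r a) (insert (r b) {c | c ∈ Set.range r ∧ a < c ∧ c < b}) := by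
      rintro _ ⟨x, hx, rfl⟩
      by_cases hxa : r x ≤ a
      · exact Or.inl (hr_eq _ _ ((hr x).of_mem_uIcc (Set.mem_uIcc_of_ge hxa (ht hx).1)))
      by_cases hxb : b ≤ r x
      · exact Or.inr (Or.inl (hr_eq _ _ ((hr x).of_mem_uIcc (Set.mem_uIcc_of_le (ht hx).2 hxb))))
      exact Or.inr (Or.inr ⟨⟨x, rfl⟩, not_le.1 hxa, not_le.1 hxb⟩)
    have h1 : (1 : Cardinal) < κ := Cardinal.one_lt_aleph0.trans_le hκ
    calc #(r '' t) ≤ #{c | c ∈ Set.range r ∧ a < c ∧ c < b} + 1 + 1 :=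
          (Cardinal.mk_le_mk_of_subset hsub).trans
            (Cardinal.mk_insert_le.trans (add_le_add_left Cardinal.mk_insert_le 1))
      _ < κ := Cardinal.add_lt_of_lt hκ (Cardinal.add_lt_of_lt hκ hlt h1) h1
  · refine lt_of_not_lCondensed hκ (fun h => hww'.ne (Subtype.ext ?_)) hww' (hf w x hx) (hf w' y hy)
    exact eq_of_lCondensed_of_mem_range hκ hr hr_eq (Set.image_subset_range r t w.2)
      (Set.image_subset_range r t w'.2) h
  · refine inLClass_of_forall_Icc hκ ((Cardinal.mk_set_le _).trans hα) fun p hp q hq s hs => ?_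
    exact ((hf w p hp).symm.trans hκ (hf w q hq)) s
      (hs.trans (Set.inter_subset_right.trans Set.Icc_subset_uIcc))

theorem kDense_range_of_not_lCondensed (hκ : ℵ₀ ≤ κ) (hα : #α ≤ κ) {r : α → α}
    (hr : ∀ x, LCondensed κ x (r x)) (hr_eq : ∀ x y, LCondensed κ x y → r x = r y)
    (hxy : ¬LCondensed κ x y) : KDense κ (Set.range r) := by
  refine ⟨Cardinal.two_le_iff.2 ⟨⟨r x, x, rfl⟩, ⟨r y, y, rfl⟩, fun h => hxy ?_⟩, ?_⟩
  · have hrxy : r x = r y := congrArg Subtype.val h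
    exact (hr x).trans hκ (hrxy ▸ (hr y).symm)
  intro a ha b hb hab
  refine le_antisymm ((Cardinal.mk_set_le _).trans hα) (not_lt.1 fun hlt => hab.ne ?_)
  exact eq_of_lCondensed_of_mem_range hκ hr hr_eq ha hb
    (lCondensed_of_mk_between_lt hκ hα hr hr_eq hab.le hlt)

theorem inLClass_of_kScattered (hκ : ℵ₀ ≤ κ) (hsc : KScattered κ α) (hα : #α ≤ κ) :
    InLClass κ α inferInstance := by
  suffices hall : ∀ x y : α, LCondensed κ x y by
    refine InLClass.iso _ _ _ _ (inLClass_of_forall_Icc hκ ((Cardinal.mk_set_le _).trans hα)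
      fun a _ b _ t ht => hall a b t (ht.trans ?_)) OrderIso.Set.univ
    exact Set.inter_subset_right.trans Set.Icc_subset_uIcc
  by_contra! ⟨x, y, hxy⟩
  let S : Setoid α := ⟨LCondensed κ, ⟨lCondensed_refl hκ, LCondensed.symm, LCondensed.trans hκ⟩⟩
  exact hsc ⟨_, kDense_range_of_not_lCondensed hκ hα (r := fun x => (Quotient.mk S x).out)
    (fun x => (Quotient.mk_out (s := S) x).symm)
    (fun x y h => congrArg Quotient.out (Quotient.sound h)) hxy⟩

end Condensation

/-- The class `L_{∞,κ}` is exactly the class of κ-scattered linear orders of size at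
most κ; in particular it contains every ordinal `β < κ⁺` and its reverse. -/
theorem inLClass_eq_kScattered (κ : Cardinal.{u}) (hκ : ℵ₀ ≤ κ) :
    (∀ (α : Type u) (instα : LinearOrder α),
        InLClass κ α instα ↔ (KScattered κ α ∧ #α ≤ κ)) ∧
    (∀ β : Ordinal.{u}, β < (Order.succ κ).ord →
        InLClass κ β.ToType inferInstance ∧ InLClass κ (β.ToType)ᵒᵈ inferInstance) := by
  have hκ0 : κ ≠ 0 := ne_bot_of_le_ne_bot Cardinal.aleph0_ne_zero hκ
  refine ⟨fun α _ => ⟨InLClass.kScattered_and_mk_le hκ, fun ⟨hsc, hα⟩ =>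
    inLClass_of_kScattered hκ hsc hα⟩, fun β hβ => ?_⟩
  have hβ : #β.ToType ≤ κ := by
    rw [Cardinal.mk_toType]
    exact Order.lt_succ_iff.1 (Cardinal.lt_ord.1 hβ)
  exact ⟨inLClass_of_kScattered hκ (kScattered_of_wellFoundedLT hκ0) hβ,
    inLClass_of_kScattered hκ (kScattered_of_wellFoundedGT hκ0) hβ⟩

end StructuredSunflowers
end

section
/- Let κ be an infinite cardinal and X a κ-scattered linear order of size κ. Then X can be written as a lexicographic sum X = Σ_{i∈D} X_i where the index order D either has size < κ or has order type κ or κ*, and no X_i contains an isomorphic copy of X as a suborder. -/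
/-!
Call `x` and `y` equivalent when the interval between them embeds into a member of
`L_{∞,κ}`. Gluing along monotone maps onto `κ`, `κ*` or orders of size `< κ` shows that this
is an equivalence relation with convex classes, that an order of size `≤ κ` whose points are
all equivalent embeds into `L_{∞,κ}`, and hence that between two inequivalent points there are
at least `κ` classes. Chosen representatives of the classes strictly between two inequivalent
points would then form a κ-dense suborder, so a κ-scattered `X` of size `κ` embeds into some
`Z ∈ L_{∞,κ}`. Following the construction of `Z` through summands that still contain a copy of
`X`, one reaches a sum none of whose summands does; the preimages of its summands decompose `X`.
-/

open Cardinal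

universe u

namespace StructuredSunflowers

def EmbedsInLClass (κ : Cardinal.{u}) (α : Type u) [LinearOrder α] : Prop :=
  ∃ (Z : Type u) (iZ : LinearOrder Z), InLClass κ Z iZ ∧ Nonempty (α ↪o Z)

namespace EmbedsInLClass

variable {κ : Cardinal.{u}} {α β D : Type u} [LinearOrder α] [LinearOrder β] [LinearOrder D]

lemma of_card_lt (h : #α < κ) : EmbedsInLClass κ α :=
  ⟨α, _, .small α _ h, ⟨(OrderIso.refl α).toOrderEmbedding⟩⟩

lemma of_strictMono (m : α → β) (hm : StrictMono m) (h : EmbedsInLClass κ β) :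
    EmbedsInLClass κ α := by
  obtain ⟨Z, iZ, hZ, ⟨g⟩⟩ := h
  exact ⟨Z, iZ, hZ, ⟨(OrderEmbedding.ofStrictMono m hm).trans g⟩⟩

lemma of_mapsTo {t : Set β} (m : α → β) (hm : StrictMono m) (hmt : ∀ a, m a ∈ t)
    (h : EmbedsInLClass κ t) : EmbedsInLClass κ α :=
  of_strictMono (t.codRestrict m hmt) hm h

lemma of_monotone_fibers (f : α → D) (hf : Monotone f)
    (hD : #D < κ ∨ Nonempty (D ≃o κ.ord.ToType) ∨ Nonempty (D ≃o (κ.ord.ToType)ᵒᵈ))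
    (h : ∀ i, EmbedsInLClass κ (f ⁻¹' {i})) : EmbedsInLClass κ α := by
  choose Z iZ hZ g using h
  let g' i : f ⁻¹' {i} ↪o Z i := (g i).some
  have lex_lt : ∀ p q : Σ i, f ⁻¹' {i}, p.2.1 < q.2.1 →
      toLex (⟨p.1, g' p.1 p.2⟩ : Σ i, Z i) < toLex ⟨q.1, g' q.1 q.2⟩ := by
    rintro ⟨i, x, hx⟩ ⟨j, y, hy⟩ hxy
    obtain hij | rfl := (show i ≤ j from hx ▸ hy ▸ hf hxy.le).lt_or_eq
    · exact Sigma.Lex.left _ _ hij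
    · exact Sigma.Lex.right _ _ ((g' i).strictMono hxy)
  exact ⟨Σₗ i, Z i, _, .sum D _ Z iZ hD hZ,
    ⟨.ofStrictMono (fun x => toLex ⟨f x, g' (f x) ⟨x, rfl⟩⟩) fun x y hxy =>
      lex_lt ⟨f x, x, rfl⟩ ⟨f y, y, rfl⟩ hxy⟩⟩

lemma of_monotone_pred (hκ : ℵ₀ ≤ κ) (p : α → Prop) (hp : Monotone p)
    (hneg : EmbedsInLClass κ {a | ¬ p a}) (hpos : EmbedsInLClass κ {a | p a}) :
    EmbedsInLClass κ α := by
  refine of_monotone_fibers (fun a => ULift.up.{u} (p a)) (fun a b hab => hp hab)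
    (.inl ((lt_aleph0_of_finite _).trans_le hκ)) fun ⟨q⟩ => ?_
  by_cases hq : q
  · refine of_mapsTo Subtype.val (fun _ _ h => h) (fun a => ?_) hpos
    exact (congrArg ULift.down a.2).mpr hq
  · refine of_mapsTo Subtype.val (fun _ _ h => h) (fun a => ?_) hneg
    exact fun ha => hq ((congrArg ULift.down a.2).mp ha)

/-- Enumerate `β` along `κ` by `c` and send `w` to the first index whose point lies above it. -/
lemma exists_monotone_toType_ord_le [Nonempty β] (hβ : #β ≤ κ) :
    ∃ (f : β → κ.ord.ToType) (c : κ.ord.ToType → β), Monotone f ∧ ∀ w, w ≤ c (f w) := by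
  rw [← mk_ord_toType κ] at hβ
  obtain ⟨e⟩ := hβ
  set c := Function.invFun e
  have hc : ∀ w, ∃ a, w ≤ c a := fun w => ⟨e w, (Function.leftInverse_invFun e.injective w).ge⟩
  have wf : WellFounded ((· < ·) : κ.ord.ToType → κ.ord.ToType → Prop) := wellFounded_lt
  refine ⟨fun w => wf.min {a | w ≤ c a} (hc w), c, fun w w' hww' => ?_,
    fun w => wf.min_mem {a | w ≤ c a} (hc w)⟩
  exact wf.min_le (hww'.trans (wf.min_mem {a | w' ≤ c a} (hc w')))

lemma of_forall_Iic (hκ : ℵ₀ ≤ κ) (hβ : #β ≤ κ) (h : ∀ b : β, EmbedsInLClass κ (Set.Iic b)) :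
    EmbedsInLClass κ β := by
  cases isEmpty_or_nonempty β
  · exact of_card_lt (by simpa using aleph0_pos.trans_le hκ)
  obtain ⟨f, c, hf, hc⟩ := exists_monotone_toType_ord_le hβ
  refine of_monotone_fibers f hf (.inr (.inl ⟨OrderIso.refl _⟩)) fun i => ?_
  refine of_mapsTo Subtype.val (fun _ _ h => h) (fun ⟨w, hw⟩ => ?_) (h (c i))
  exact (hw : f w = i) ▸ hc w

lemma of_forall_Ici (hκ : ℵ₀ ≤ κ) (hβ : #β ≤ κ) (h : ∀ b : β, EmbedsInLClass κ (Set.Ici b)) :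
    EmbedsInLClass κ β := by
  cases isEmpty_or_nonempty β
  · exact of_card_lt (by simpa using aleph0_pos.trans_le hκ)
  obtain ⟨f, c, hf, hc⟩ := exists_monotone_toType_ord_le (β := βᵒᵈ) hβ
  refine of_monotone_fibers (OrderDual.toDual ∘ f ∘ OrderDual.toDual) hf.dual
    (.inr (.inr ⟨OrderIso.refl _⟩)) fun i => ?_
  refine of_mapsTo Subtype.val (fun _ _ h => h) (fun ⟨w, hw⟩ => ?_)
    (h (OrderDual.ofDual (c (OrderDual.ofDual i))))
  exact (congrArg OrderDual.ofDual hw : f (OrderDual.toDual w) = OrderDual.ofDual i) ▸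
    hc (OrderDual.toDual w)

end EmbedsInLClass

def LEquiv (κ : Cardinal.{u}) {α : Type u} [LinearOrder α] (x y : α) : Prop :=
  EmbedsInLClass κ (Set.uIcc x y)

namespace LEquiv

variable {κ : Cardinal.{u}} {α β : Type u} [LinearOrder α] [LinearOrder β] {x y z : α}

lemma refl (hκ : ℵ₀ ≤ κ) (x : α) : LEquiv κ x x := by
  refine EmbedsInLClass.of_card_lt ?_
  rw [Set.uIcc_self, mk_singleton]
  exact one_lt_aleph0.trans_le hκ

lemma symm (h : LEquiv κ x y) : LEquiv κ y x := by
  rwa [LEquiv, Set.uIcc_comm]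

lemma of_subset {a b : α} (hab : Set.uIcc a b ⊆ Set.uIcc x y) (h : LEquiv κ x y) :
    LEquiv κ a b :=
  EmbedsInLClass.of_mapsTo Subtype.val (fun _ _ h => h) (fun w => hab w.2) h

lemma of_strictMono {m : β → α} (hm : StrictMono m) {a b : β} (h : LEquiv κ (m a) (m b)) :
    LEquiv κ a b :=
  EmbedsInLClass.of_mapsTo (m ∘ Subtype.val) (hm.comp fun _ _ h => h)
    (fun w => hm.monotone.mapsTo_uIcc w.2) h

private lemma trans_of_le (hκ : ℵ₀ ≤ κ) (hxz : x ≤ z) (hxy : LEquiv κ x y)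
    (hyz : LEquiv κ y z) : LEquiv κ x z := by
  rw [LEquiv, Set.uIcc_of_le hxz]
  refine EmbedsInLClass.of_monotone_pred hκ (fun w => y ≤ w.1) (fun _ _ h hy => hy.trans h)
    ?_ ?_
  · refine EmbedsInLClass.of_mapsTo (fun w => w.1.1) (fun _ _ h => h) (fun w => ?_) hxy
    exact Set.mem_uIcc_of_le w.1.2.1 (not_le.mp w.2).le
  · exact EmbedsInLClass.of_mapsTo (fun w => w.1.1) (fun _ _ h => h)
      (fun w => Set.mem_uIcc_of_le w.2 w.1.2.2) hyz

lemma trans (hκ : ℵ₀ ≤ κ) (hxy : LEquiv κ x y) (hyz : LEquiv κ y z) : LEquiv κ x z := by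
  rcases le_total x z with h | h
  · exact trans_of_le hκ h hxy hyz
  · exact (trans_of_le hκ h hyz.symm hxy.symm).symm

lemma equivalence (hκ : ℵ₀ ≤ κ) : Equivalence (LEquiv κ : α → α → Prop) :=
  ⟨refl hκ, symm, trans hκ⟩

end LEquiv

section

variable {κ : Cardinal.{u}} {α : Type u} [LinearOrder α]

/-- Equivalence classes are convex. -/
lemma lt_of_not_lEquiv (hκ : ℵ₀ ≤ κ) {x y a b : α} (hxy : x < y) (hne : ¬ LEquiv κ x y)
    (ha : LEquiv κ a x) (hb : LEquiv κ b y) : a < b := by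
  by_contra! hba
  rcases le_or_gt y a with hya | hay
  · exact hne (ha.symm.of_subset (Set.uIcc_subset_uIcc_left (Set.mem_uIcc_of_le hxy.le hya)))
  · exact hne (ha.symm.trans hκ
      (hb.of_subset (Set.uIcc_subset_uIcc_right (Set.mem_uIcc_of_le hba hay.le))))

lemma EmbedsInLClass.of_forall_lEquiv (hκ : ℵ₀ ≤ κ) (hα : #α ≤ κ)
    (h : ∀ a b : α, LEquiv κ a b) : EmbedsInLClass κ α := by
  cases isEmpty_or_nonempty α
  · exact of_card_lt (by simpa using aleph0_pos.trans_le hκ)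
  obtain ⟨x⟩ := ‹Nonempty α›
  have hcard (s : Set α) : #s ≤ κ := (mk_set_le s).trans hα
  refine of_monotone_pred hκ (x ≤ ·) (fun _ _ h hx => hx.trans h) ?_ ?_
  · refine of_forall_Ici hκ (hcard _) fun b => ?_
    refine of_mapsTo (fun w => w.1.1) (fun _ _ h => h) (fun w => ?_) (h b x)
    exact Set.mem_uIcc_of_le w.2 (not_le.mp w.1.2).le
  · refine of_forall_Iic hκ (hcard _) fun b => ?_
    exact of_mapsTo (fun w => w.1.1) (fun _ _ h => h)
      (fun w => Set.mem_uIcc_of_le w.1.2 w.2) (h x b)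

end

noncomputable def lRep (κ : Cardinal.{u}) {α : Type u} [LinearOrder α] (x : α) : α :=
  (Quot.mk (LEquiv κ) x).out

section Representatives

variable {κ : Cardinal.{u}} {α : Type u} [LinearOrder α] {x y : α}

lemma lRep_lEquiv (hκ : ℵ₀ ≤ κ) (x : α) : LEquiv κ (lRep κ x) x :=
  (LEquiv.equivalence hκ).eqvGen_iff.mp (Quot.eqvGen_exact (Quot.out_eq _))

lemma lRep_eq_lRep (h : LEquiv κ x y) : lRep κ x = lRep κ y :=
  congrArg Quot.out (Quot.sound h)

lemma lEquiv_of_lRep_eq (hκ : ℵ₀ ≤ κ) (h : lRep κ x = lRep κ y) : LEquiv κ x y :=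
  (lRep_lEquiv hκ x).symm.trans hκ (h ▸ lRep_lEquiv hκ y)

lemma lRep_eq_self (hκ : ℵ₀ ≤ κ) (hx : x ∈ Set.range (lRep κ)) : lRep κ x = x := by
  obtain ⟨w, rfl⟩ := hx
  exact lRep_eq_lRep (lRep_lEquiv hκ w)

lemma ne_of_not_lEquiv (hκ : ℵ₀ ≤ κ) (h : ¬ LEquiv κ x y) : x ≠ y := by
  rintro rfl
  exact h (.refl hκ x)

lemma monotone_lRep (hκ : ℵ₀ ≤ κ) : Monotone (lRep κ : α → α) := by
  intro x y hxy
  by_cases h : LEquiv κ x y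
  · exact (lRep_eq_lRep h).le
  · exact (lt_of_not_lEquiv hκ (hxy.lt_of_ne (ne_of_not_lEquiv hκ h)) h
      (lRep_lEquiv hκ x) (lRep_lEquiv hκ y)).le

lemma lRep_mem_of_mem_Icc (hκ : ℵ₀ ≤ κ) {w : α} (hw : w ∈ Set.Icc x y) :
    lRep κ w ∈ insert (lRep κ x) (insert (lRep κ y) (Set.range (lRep κ) ∩ Set.Ioo x y)) := by
  by_cases hwx : LEquiv κ x w
  · exact .inl (lRep_eq_lRep hwx).symm
  by_cases hwy : LEquiv κ w y
  · exact .inr (.inl (lRep_eq_lRep hwy))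
  refine .inr (.inr ⟨⟨w, rfl⟩, ?_, ?_⟩)
  · exact lt_of_not_lEquiv hκ (hw.1.lt_of_ne (ne_of_not_lEquiv hκ hwx)) hwx (.refl hκ x)
      (lRep_lEquiv hκ w)
  · exact lt_of_not_lEquiv hκ (hw.2.lt_of_ne (ne_of_not_lEquiv hκ hwy)) hwy
      (lRep_lEquiv hκ w) (.refl hκ y)

/-- Otherwise the classes meeting `[x, y]` would partition it into fewer than `κ` convex
pieces, each embedding into `L_{∞,κ}`, and `[x, y]` itself would embed. -/
lemma le_card_range_lRep_inter_Ioo (hκ : ℵ₀ ≤ κ) (hα : #α ≤ κ) (hxy : x < y)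
    (hne : ¬ LEquiv κ x y) : κ ≤ #(Set.range (lRep κ) ∩ Set.Ioo x y : Set α) := by
  by_contra! hlt
  refine hne ?_
  rw [LEquiv, Set.uIcc_of_le hxy.le]
  have h1 : (1 : Cardinal) < κ := one_lt_aleph0.trans_le hκ
  refine EmbedsInLClass.of_monotone_fibers (fun w => ⟨lRep κ w.1, lRep_mem_of_mem_Icc hκ w.2⟩)
    (fun a b h => show lRep κ a.1 ≤ lRep κ b.1 from monotone_lRep hκ h)
    (.inl (mk_insert_le.trans_lt (add_lt_of_lt hκ
      (mk_insert_le.trans_lt (add_lt_of_lt hκ hlt h1)) h1))) fun d => ?_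
  refine EmbedsInLClass.of_forall_lEquiv hκ
    ((mk_le_of_injective (Subtype.val_injective.comp Subtype.val_injective)).trans hα)
    fun a b => LEquiv.of_strictMono (m := fun w => w.1.1) (fun _ _ h => h) ?_
  exact lEquiv_of_lRep_eq hκ (congrArg Subtype.val (a.2.trans b.2.symm))

end Representatives

lemma EmbedsInLClass.of_kScattered {κ : Cardinal.{u}} {α : Type u} [LinearOrder α]
    (hκ : ℵ₀ ≤ κ) (hα : #α ≤ κ) (hs : KScattered κ α) : EmbedsInLClass κ α := by
  suffices h : ∀ x y : α, x < y → LEquiv κ x y by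
    refine of_forall_lEquiv hκ hα fun x y => ?_
    rcases lt_trichotomy x y with hxy | rfl | hyx
    exacts [h x y hxy, .refl hκ x, (h y x hyx).symm]
  intro x y hxy
  by_contra hne
  have h2 : (2 : Cardinal) ≤ κ := ofNat_le_aleph0.trans hκ
  refine hs ⟨Set.range (lRep κ) ∩ Set.Ioo x y,
    h2.trans (le_card_range_lRep_inter_Ioo hκ hα hxy hne), fun a ha b hb hab => ?_⟩
  have hab' : ¬ LEquiv κ a b := fun h =>
    hab.ne (by rw [← lRep_eq_self hκ ha.1, ← lRep_eq_self hκ hb.1, lRep_eq_lRep h])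
  refine le_antisymm ((mk_set_le _).trans hα)
    ((le_card_range_lRep_inter_Ioo hκ hα hab hab').trans (mk_le_mk_of_subset ?_))
  rintro c ⟨hc, hac, hcb⟩
  exact ⟨⟨hc, ha.2.1.trans hac, hcb.trans hb.2.2⟩, hac, hcb⟩

namespace Sigma.Lex

variable {ι : Type u} [LinearOrder ι] {A : ι → Type u} [∀ i, LinearOrder (A i)]

lemma monotone_fst : Monotone (fun p : Σₗ i, A i => p.1) := fun _ _ h =>
  (Sigma.Lex.le_def.mp h).elim le_of_lt fun ⟨h, _⟩ => h.le

lemma cast_snd_lt_cast_snd {i : ι} {p q : Σₗ j, A j} (hpq : p < q) (hp : p.1 = i)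
    (hq : q.1 = i) : cast (congrArg A hp) p.2 < cast (congrArg A hq) q.2 := by
  obtain ⟨j, a⟩ := p
  obtain ⟨k, b⟩ := q
  change j = i at hp
  change k = i at hq
  subst hp hq
  cases hpq with
  | left _ _ h => exact absurd h (lt_irrefl _)
  | right _ _ h => exact h

end Sigma.Lex

theorem exists_decomposition_of_embedding {κ : Cardinal.{u}} {X Z : Type u} [LinearOrder X]
    [iZ : LinearOrder Z] (hX : κ ≤ #X) (hZ : InLClass κ Z iZ) (e : X ↪o Z) :
    ∃ (D : Type u) (_ : LinearOrder D) (f : X → D), Monotone f ∧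
      (#D < κ ∨ Nonempty (D ≃o κ.ord.ToType) ∨ Nonempty (D ≃o (κ.ord.ToType)ᵒᵈ)) ∧
      ∀ i : D, ¬ Nonempty (X ↪o (f ⁻¹' {i})) := by
  induction hZ with
  | small α _ hα => exact absurd (hX.trans (mk_le_of_injective e.injective)) hα.not_ge
  | sum ι _ A _ hι _ ih =>
    by_cases hsummand : ∃ i, Nonempty (X ↪o A i)
    · obtain ⟨i, ⟨e'⟩⟩ := hsummand
      exact ih i e'
    refine ⟨ι, _, fun x => (e x).1, Sigma.Lex.monotone_fst.comp e.monotone, hι,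
      fun i ⟨m⟩ => hsummand ⟨i, ⟨m.trans (OrderEmbedding.ofStrictMono
        (fun z => cast (congrArg A z.2) (e z.1).2) ?_)⟩⟩⟩
    exact fun a b hab => Sigma.Lex.cast_snd_lt_cast_snd (e.strictMono hab) a.2 b.2
  | iso α _ β _ _ e' ih => exact ih (e.trans e'.symm.toOrderEmbedding)

/-- Every κ-scattered linear order of size κ decomposes as a lexicographic sum, indexed
by an order of size `< κ` or of order type `κ` or `κ*`, none of whose summands contains
a copy of the whole order. -/
theorem kScattered_decomposition (κ : Cardinal.{u}) (hκ : ℵ₀ ≤ κ) (X : Type u)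
    [LinearOrder X] (hX : KScattered κ X) (hcard : #X = κ) :
    ∃ (D : Type u) (_ : LinearOrder D) (f : X → D), Monotone f ∧
      (#D < κ ∨ Nonempty (D ≃o κ.ord.ToType) ∨ Nonempty (D ≃o (κ.ord.ToType)ᵒᵈ)) ∧
      ∀ i : D, ¬ Nonempty (X ↪o (f ⁻¹' {i})) := by
  obtain ⟨Z, iZ, hZ, ⟨e⟩⟩ := EmbedsInLClass.of_kScattered hκ hcard.le hX
  exact exists_decomposition_of_embedding hcard.ge hZ e

end StructuredSunflowers
end

section
/- If an age K (a class of finite L-structures closed under isomorphism) has the joint embedding property and is indivisible, then K has unique unary quantifier-free types: for all A, B ∈ K and all a ∈ A, b ∈ B, the quantifier-free type of a in A equals the quantifier-free type of b in B. -/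
open FirstOrder Cardinal

universe u v w x

namespace StructuredSunflowers

variable (L : FirstOrder.Language.{u, v})

section

variable {L : FirstOrder.Language.{u, v}}

theorem realize_comp_embedding_of_isQF {M N : Type*} [L.Structure M] [L.Structure N]
    {α : Type*} {φ : L.Formula α} (hφ : φ.IsQF) (f : M ↪[L] N) (v : α → M) :
    φ.Realize (f ∘ v) ↔ φ.Realize v := by
  have h := hφ.realize_embedding f (v := v) (xs := default)
  rwa [Subsingleton.elim (f ∘ default) default] at h

/-- Colour each point of `D` by whether it satisfies `φ`: a monochromatic copy of `C` then
shows that all points of `C` agree on `φ`. -/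
theorem realize_unary_iff_of_forall_two_coloring {C D : Type*} [L.Structure C]
    [L.Structure D] (hD : ∀ c : D → Fin 2, ∃ g : C ↪[L] D, ∃ k, ∀ x, c (g x) = k)
    {φ : L.Formula (Fin 1)} (hφ : φ.IsQF) (x y : C) :
    φ.Realize (fun _ => x) ↔ φ.Realize (fun _ => y) := by
  classical
  obtain ⟨g, k, hk⟩ := hD fun z => if φ.Realize (fun _ => z) then 0 else 1
  have hxy := (hk x).trans (hk y).symm
  calc φ.Realize (fun _ => x)
      ↔ φ.Realize (fun _ => g x) := (realize_comp_embedding_of_isQF hφ g _).symm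
    _ ↔ φ.Realize (fun _ => g y) := by split_ifs at hxy <;> simp_all
    _ ↔ φ.Realize (fun _ => y) := realize_comp_embedding_of_isQF hφ g _

end

theorem uniqueUnaryQF_of_jep_indivisible_general (L : FirstOrder.Language.{u, v})
    (K : ∀ A : Type w, L.Structure A → Prop)
    (hjep : ∀ (A : Type w) (instA : L.Structure A) (B : Type w) (instB : L.Structure B),
      K A instA → K B instB →
      ∃ (C : Type w) (instC : L.Structure C), K C instC ∧
        Nonempty (A ↪[L] C) ∧ Nonempty (B ↪[L] C))
    (hind : ∀ (A : Type w) (instA : L.Structure A), K A instA → ∀ n : ℕ,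
      ∃ (B : Type w) (instB : L.Structure B), K B instB ∧
        ∀ c : B → Fin (n + 1), ∃ g : A ↪[L] B, ∃ k : Fin (n + 1),
          ∀ a : A, c (g a) = k) :
    ∀ (A : Type w) (instA : L.Structure A) (B : Type w) (instB : L.Structure B),
      K A instA → K B instB → ∀ (a : A) (b : B) (φ : L.Formula (Fin 1)), φ.IsQF →
        (φ.Realize (fun _ => a) ↔ φ.Realize (fun _ => b)) := by
  intro A _ B _ hA hB a b φ hφ
  obtain ⟨C, _, hC, ⟨fA⟩, ⟨fB⟩⟩ := hjep A _ B _ hA hB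
  obtain ⟨D, _, -, hD⟩ := hind C _ hC 1
  calc φ.Realize (fun _ => a)
      ↔ φ.Realize (fun _ => fA a) := (realize_comp_embedding_of_isQF hφ fA _).symm
    _ ↔ φ.Realize (fun _ => fB b) := realize_unary_iff_of_forall_two_coloring hD hφ _ _
    _ ↔ φ.Realize (fun _ => b) := realize_comp_embedding_of_isQF hφ fB _

/-- An age (an isomorphism-closed class of finite structures) with the joint embedding
property which is indivisible has unique unary quantifier-free types. -/
theorem uniqueUnaryQF_of_jep_indivisible (L : FirstOrder.Language.{u, v})
    (K : ∀ A : Type w, L.Structure A → Prop)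
    (hiso : ∀ (A : Type w) (instA : L.Structure A) (B : Type w) (instB : L.Structure B),
      K A instA → Nonempty (A ≃[L] B) → K B instB)
    (hfin : ∀ (A : Type w) (instA : L.Structure A), K A instA → Finite A)
    (hjep : ∀ (A : Type w) (instA : L.Structure A) (B : Type w) (instB : L.Structure B),
      K A instA → K B instB →
      ∃ (C : Type w) (instC : L.Structure C), K C instC ∧
        Nonempty (A ↪[L] C) ∧ Nonempty (B ↪[L] C))
    (hind : ∀ (A : Type w) (instA : L.Structure A), K A instA → ∀ n : ℕ,
      ∃ (B : Type w) (instB : L.Structure B), K B instB ∧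
        ∀ c : B → Fin (n + 1), ∃ g : A ↪[L] B, ∃ k : Fin (n + 1),
          ∀ a : A, c (g a) = k) :
    ∀ (A : Type w) (instA : L.Structure A) (B : Type w) (instB : L.Structure B),
      K A instA → K B instB → ∀ (a : A) (b : B) (φ : L.Formula (Fin 1)), φ.IsQF →
        (φ.Realize (fun _ => a) ↔ φ.Realize (fun _ => b)) :=
  uniqueUnaryQF_of_jep_indivisible_general L K hjep hind

end StructuredSunflowers
end
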